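/- arXiv:2510.07917 — 9 statements merged into one kernel-verified Lean document; each statement's English description precedes it below -/
import Mathlib

section
/- Let X be a nonempty countable type and give ℕ → X the product topology (X discrete). If A, B ⊆ ℕ → X are countable dense sets, then there exists f : (ℕ → X) → (ℕ → X) which is an isometry (for all x, y : ℕ → X and all n, x and y agree below n if and only if f x and f y agree below n) and satisfies f '' A = B. -/
/-!
A back-and-forth argument matches the enumerations of `A` and `B` through a relation `R ⊆ A × B`
whose pairs realise the same agreement lengths on both sides. To add a new point `x` on the left,
take the already matched `x₀` sharing the longest prefix with `x`, say of length `M`, and choose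
the partner `y ∈ B` to follow the partner of `x₀` below `M` and to avoid, at `M`, every partner of
a point splitting off from `x` at `M`; some value is free because these finitely many partners
correspond injectively to values other than `x M`. Finally `R` is the graph of a map on the dense
set `A`, which extends to the whole space by reading `f z` below `n` off any point of `A` that
agrees with `z` below `n`.
-/

open Set Function PiNat

theorem Finset.exists_forall_ne_of_factor {ι α : Type*} (s : Finset ι) (f g : ι → α)
    (hfg : ∀ i ∈ s, ∀ j ∈ s, f i = f j → g i = g j) {a : α} (ha : ∀ i ∈ s, f i ≠ a) :
    ∃ b, ∀ i ∈ s, g i ≠ b := by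
  by_contra! hcover
  choose i hi hgi using hcover
  have : Finite α :=
    Finite.of_injective (fun b => (⟨i b, hi b⟩ : s)) fun b b' h => by
      rw [← hgi b, ← hgi b']; exact congrArg (g ∘ Subtype.val) h
  have hinj : Injective (f ∘ i) := fun b b' h => by
    rw [← hgi b, ← hgi b']; exact hfg _ (hi b) _ (hi b') h
  obtain ⟨b, hb⟩ := Finite.injective_iff_surjective.1 hinj a
  exact ha _ (hi b) hb

theorem Finset.forall_mem_insert_pairwise {α : Type*} [DecidableEq α] {C : α → α → Prop}
    (hrefl : ∀ p, C p p) (hsymm : ∀ p q, C p q → C q p) {s : Finset α} {p : α}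
    (hs : ∀ q ∈ s, ∀ r ∈ s, C q r) (hp : ∀ q ∈ s, C p q) :
    ∀ q ∈ insert p s, ∀ r ∈ insert p s, C q r := by
  simp only [Finset.mem_insert, forall_eq_or_imp]
  exact ⟨⟨hrefl p, hp⟩, fun q hq => ⟨hsymm _ _ (hp q hq), hs q hq⟩⟩

theorem exists_superset_of_back_and_forth {α β : Type*} [DecidableEq α] [DecidableEq β]
    {C : α × β → α × β → Prop} (hrefl : ∀ p, C p p) (hsymm : ∀ p q, C p q → C q p)
    {A : Set α} {B : Set β}
    (forth : ∀ s : Finset (α × β), (∀ p ∈ s, ∀ q ∈ s, C p q) → ↑s ⊆ A ×ˢ B →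
      ∀ x ∈ A, ∃ y ∈ B, ∀ q ∈ s, C (x, y) q)
    (back : ∀ s : Finset (α × β), (∀ p ∈ s, ∀ q ∈ s, C p q) → ↑s ⊆ A ×ˢ B →
      ∀ y ∈ B, ∃ x ∈ A, ∀ q ∈ s, C (x, y) q)
    {s : Finset (α × β)} (hs : ∀ p ∈ s, ∀ q ∈ s, C p q) (hsAB : ↑s ⊆ A ×ˢ B)
    {x : α} {y : β} (hx : x ∈ A) (hy : y ∈ B) :
    ∃ t, s ⊆ t ∧ (∀ p ∈ t, ∀ q ∈ t, C p q) ∧ ↑t ⊆ A ×ˢ B ∧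
      x ∈ Prod.fst '' (t : Set (α × β)) ∧ y ∈ Prod.snd '' (t : Set (α × β)) := by
  obtain ⟨y', hy', hy's⟩ := forth s hs hsAB x hx
  set s₁ := insert (x, y') s
  have hs₁ := Finset.forall_mem_insert_pairwise hrefl hsymm hs hy's
  have hs₁AB : ↑s₁ ⊆ A ×ˢ B := by
    rw [Finset.coe_insert]; exact insert_subset ⟨hx, hy'⟩ hsAB
  obtain ⟨x', hx', hx's⟩ := back s₁ hs₁ hs₁AB y hy
  refine ⟨insert (x', y) s₁, (Finset.subset_insert _ s).trans (Finset.subset_insert _ _),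
    Finset.forall_mem_insert_pairwise hrefl hsymm hs₁ hx's, ?_,
    ⟨(x, y'), by simp [s₁], rfl⟩, ⟨(x', y), by simp, rfl⟩⟩
  rw [Finset.coe_insert]; exact insert_subset ⟨hx', hy⟩ hs₁AB

theorem exists_pairwise_of_back_and_forth {α β : Type*} {C : α × β → α × β → Prop}
    (hrefl : ∀ p, C p p) (hsymm : ∀ p q, C p q → C q p) (a : ℕ → α) (b : ℕ → β)
    (forth : ∀ s : Finset (α × β), (∀ p ∈ s, ∀ q ∈ s, C p q) → ↑s ⊆ range a ×ˢ range b →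
      ∀ x ∈ range a, ∃ y ∈ range b, ∀ q ∈ s, C (x, y) q)
    (back : ∀ s : Finset (α × β), (∀ p ∈ s, ∀ q ∈ s, C p q) → ↑s ⊆ range a ×ˢ range b →
      ∀ y ∈ range b, ∃ x ∈ range a, ∀ q ∈ s, C (x, y) q) :
    ∃ R : Set (α × β), (∀ p ∈ R, ∀ q ∈ R, C p q) ∧
      Prod.fst '' R = range a ∧ Prod.snd '' R = range b := by
  classical
  choose! next hnext_sub hnext_pair hnext_sub_range hnext_fst hnext_snd using
    fun (k : ℕ) (s : Finset (α × β)) hs hsab =>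
      exists_superset_of_back_and_forth hrefl hsymm forth back (s := s) hs hsab
        (mem_range_self (f := a) k) (mem_range_self (f := b) k)
  obtain ⟨S, hS_zero, hS_succ⟩ :
      ∃ S : ℕ → Finset (α × β), S 0 = ∅ ∧ ∀ k, S (k + 1) = next k (S k) :=
    ⟨fun n => Nat.rec ∅ (fun k s => next k s) n, rfl, fun _ => rfl⟩
  have hS_good : ∀ n, (∀ p ∈ S n, ∀ q ∈ S n, C p q) ∧ ↑(S n) ⊆ range a ×ˢ range b := fun n => by
    induction n with
    | zero => simp [hS_zero]
    | succ k ih => rw [hS_succ]; exact ⟨hnext_pair k _ ih.1 ih.2, hnext_sub_range k _ ih.1 ih.2⟩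
  have hS_mono : Monotone S := monotone_nat_of_le_succ fun k =>
    hS_succ k ▸ hnext_sub k _ (hS_good k).1 (hS_good k).2
  set R := ⋃ n, (S n : Set (α × β))
  have hR_sub : R ⊆ range a ×ˢ range b := iUnion_subset fun n => (hS_good n).2
  have hR_mem : ∀ k, a k ∈ Prod.fst '' R ∧ b k ∈ Prod.snd '' R := fun k => by
    have hsub : (S (k + 1) : Set (α × β)) ⊆ R := subset_iUnion (fun n => (S n : Set (α × β))) _
    rw [hS_succ] at hsub
    exact ⟨image_mono hsub (hnext_fst k _ (hS_good k).1 (hS_good k).2),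
      image_mono hsub (hnext_snd k _ (hS_good k).1 (hS_good k).2)⟩
  refine ⟨R, ?_, ?_, ?_⟩
  · simp only [R, mem_iUnion]
    rintro p ⟨i, hp⟩ q ⟨j, hq⟩
    exact (hS_good (max i j)).1 p (hS_mono (le_max_left i j) hp) q (hS_mono (le_max_right i j) hq)
  · exact Subset.antisymm (image_subset_iff.2 fun _ hp => (hR_sub hp).1)
      (range_subset_iff.2 fun k => (hR_mem k).1)
  · exact Subset.antisymm (image_subset_iff.2 fun _ hp => (hR_sub hp).2)
      (range_subset_iff.2 fun k => (hR_mem k).2)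

namespace PiNat

variable {E : ℕ → Type*}

theorem mem_cylinder_succ {x y : ∀ n, E n} {n : ℕ} :
    x ∈ cylinder y (n + 1) ↔ x ∈ cylinder y n ∧ x n = y n := by
  simp only [mem_cylinder_iff, Nat.lt_succ_iff_lt_or_eq, or_imp, forall_and, forall_eq]

theorem mem_cylinder_iff_le_of_apply_ne {x y : ∀ n, E n} {k : ℕ} (hxy : x ∈ cylinder y k)
    (hk : x k ≠ y k) (n : ℕ) : x ∈ cylinder y n ↔ n ≤ k :=
  ⟨fun h => not_lt.1 fun hkn => hk (h k hkn), fun h => cylinder_anti y h hxy⟩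

theorem _root_.Dense.exists_mem_cylinder [∀ n, TopologicalSpace (E n)]
    [∀ n, DiscreteTopology (E n)] {B : Set (∀ n, E n)} (hB : Dense B) (z : ∀ n, E n) (n : ℕ) :
    ∃ y ∈ B, y ∈ cylinder z n :=
  hB.exists_mem_open (isOpen_cylinder E z n) ⟨z, self_mem_cylinder z n⟩

/-- The partial map `p.1 ↦ p.2, q.1 ↦ q.2` preserves agreement lengths. -/
def IsometricPairs (p q : (∀ n, E n) × (∀ n, E n)) : Prop :=
  ∀ n, p.1 ∈ cylinder q.1 n ↔ p.2 ∈ cylinder q.2 n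

theorem isometricPairs_refl (p : (∀ n, E n) × (∀ n, E n)) : IsometricPairs p p :=
  fun n => iff_of_true (self_mem_cylinder _ n) (self_mem_cylinder _ n)

theorem IsometricPairs.symm {p q : (∀ n, E n) × (∀ n, E n)} (h : IsometricPairs p q) :
    IsometricPairs q p := fun n => by
  rw [mem_cylinder_comm, h n, mem_cylinder_comm]

theorem isometricPairs_swap {p q : (∀ n, E n) × (∀ n, E n)} :
    IsometricPairs p.swap q.swap ↔ IsometricPairs p q :=
  forall_congr' fun _ => Iff.comm

variable {s : Finset ((∀ n, E n) × (∀ n, E n))}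

theorem isometricPairs_of_nearest (hs : ∀ p ∈ s, ∀ q ∈ s, IsometricPairs p q)
    {x y : ∀ n, E n} {p₀ : (∀ n, E n) × (∀ n, E n)} {M : ℕ} (hp₀ : p₀ ∈ s)
    (hx : ∀ q ∈ s, x ≠ q.1) (hM : firstDiff x p₀.1 = M) (hmax : ∀ q ∈ s, firstDiff x q.1 ≤ M)
    (hy : y ∈ cylinder p₀.2 M) (hy_ne : ∀ q ∈ s, firstDiff x q.1 = M → y M ≠ q.2 M) :
    ∀ q ∈ s, IsometricPairs (x, y) q := by
  intro q hq
  set k := firstDiff x q.1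
  have hx₀ : x ∈ cylinder p₀.1 M := hM ▸ mem_cylinder_firstDiff x p₀.1
  have hxq : x ∈ cylinder q.1 k := mem_cylinder_firstDiff x q.1
  have hp₀q : p₀.1 ∈ cylinder q.1 k := by
    rw [mem_cylinder_iff_eq, ← mem_cylinder_iff_eq.1 hxq, mem_cylinder_iff_eq.1
      (cylinder_anti _ (hmax q hq) hx₀)]
  have hp₀q' : p₀.2 ∈ cylinder q.2 k := (hs p₀ hp₀ q hq k).1 hp₀q
  have hyq : y ∈ cylinder q.2 k := by
    rw [mem_cylinder_iff_eq, mem_cylinder_iff_eq.1 (cylinder_anti _ (hmax q hq) hy),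
      mem_cylinder_iff_eq.1 hp₀q']
  have hyk : y k ≠ q.2 k := by
    rcases (hmax q hq).eq_or_lt with hkM | hkM
    · rw [show k = M from hkM]; exact hy_ne q hq hkM
    · rw [hy k hkM]
      intro h
      have : p₀.1 ∈ cylinder q.1 (k + 1) := (hs p₀ hp₀ q hq _).2 (mem_cylinder_succ.2 ⟨hp₀q', h⟩)
      exact apply_firstDiff_ne (hx q hq) ((hx₀ k hkM).trans (this k k.lt_succ_self))
  intro n
  rw [mem_cylinder_iff_le_firstDiff (hx q hq), mem_cylinder_iff_le_of_apply_ne hyq hyk]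

theorem exists_forall_apply_ne_of_firstDiff_eq (hs : ∀ p ∈ s, ∀ q ∈ s, IsometricPairs p q)
    {x : ∀ n, E n} (hx : ∀ q ∈ s, x ≠ q.1) (M : ℕ) :
    ∃ v, ∀ q ∈ s, firstDiff x q.1 = M → q.2 M ≠ v := by
  classical
  have hpre : ∀ q ∈ s, firstDiff x q.1 = M → q.1 ∈ cylinder x M := fun q _ hqM =>
    (mem_cylinder_comm _ _ _).1 (hqM ▸ mem_cylinder_firstDiff x q.1)
  set s' := s.filter fun q => firstDiff x q.1 = M
  have hfactor : ∀ q ∈ s', ∀ q' ∈ s', q.1 M = q'.1 M → q.2 M = q'.2 M := by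
    simp only [s', Finset.mem_filter, and_imp]
    intro q hq hqM q' hq' hq'M h
    have : q.1 ∈ cylinder q'.1 (M + 1) := by
      refine mem_cylinder_succ.2 ⟨?_, h⟩
      rw [mem_cylinder_iff_eq, mem_cylinder_iff_eq.1 (hpre q hq hqM),
        mem_cylinder_iff_eq.1 (hpre q' hq' hq'M)]
    exact (hs q hq q' hq' _).1 this M M.lt_succ_self
  have hmiss : ∀ q ∈ s', q.1 M ≠ x M := by
    simp only [s', Finset.mem_filter, and_imp]
    intro q hq hqM h
    exact apply_firstDiff_ne (hx q hq) (hqM ▸ h.symm)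
  obtain ⟨v, hv⟩ := s'.exists_forall_ne_of_factor _ _ hfactor hmiss
  exact ⟨v, fun q hq hqM => hv q (Finset.mem_filter.2 ⟨hq, hqM⟩)⟩

theorem _root_.Dense.exists_isometricPairs_snd [∀ n, TopologicalSpace (E n)]
    [∀ n, DiscreteTopology (E n)] {B : Set (∀ n, E n)} (hB : Dense B)
    (hs : ∀ p ∈ s, ∀ q ∈ s, IsometricPairs p q) (hsB : ∀ p ∈ s, p.2 ∈ B) (x : ∀ n, E n) :
    ∃ y ∈ B, ∀ q ∈ s, IsometricPairs (x, y) q := by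
  by_cases hxs : ∃ p ∈ s, p.1 = x
  · obtain ⟨p, hp, rfl⟩ := hxs
    exact ⟨p.2, hsB p hp, hs p hp⟩
  push Not at hxs
  have hx : ∀ q ∈ s, x ≠ q.1 := fun q hq => (hxs q hq).symm
  rcases s.eq_empty_or_nonempty with rfl | hne
  · obtain ⟨y, hy, -⟩ := hB.exists_mem_cylinder x 0
    exact ⟨y, hy, by simp⟩
  obtain ⟨p₀, hp₀, hmax⟩ := s.exists_max_image (fun q => firstDiff x q.1) hne
  set M := firstDiff x p₀.1 with hM
  obtain ⟨v, hv⟩ := exists_forall_apply_ne_of_firstDiff_eq hs hx M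
  obtain ⟨y, hyB, hy⟩ := hB.exists_mem_cylinder (update p₀.2 M v) (M + 1)
  have hyM : y M = v := by simpa using hy M M.lt_succ_self
  refine ⟨y, hyB, isometricPairs_of_nearest hs hp₀ hx hM.symm hmax ?_
    fun q hq hqM => hyM ▸ (hv q hq hqM).symm⟩
  rw [mem_cylinder_iff_eq, mem_cylinder_iff_eq.1 (cylinder_anti _ M.le_succ hy),
    mem_cylinder_iff_eq.1 (update_mem_cylinder p₀.2 M v)]

theorem _root_.Dense.exists_isometricPairs_fst [∀ n, TopologicalSpace (E n)]
    [∀ n, DiscreteTopology (E n)] {A : Set (∀ n, E n)} (hA : Dense A)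
    (hs : ∀ p ∈ s, ∀ q ∈ s, IsometricPairs p q) (hsA : ∀ p ∈ s, p.1 ∈ A) (y : ∀ n, E n) :
    ∃ x ∈ A, ∀ q ∈ s, IsometricPairs (x, y) q := by
  classical
  have hs' : ∀ p ∈ s.image Prod.swap, ∀ q ∈ s.image Prod.swap, IsometricPairs p q := by
    simp only [Finset.mem_image]
    rintro _ ⟨p, hp, rfl⟩ _ ⟨q, hq, rfl⟩
    exact isometricPairs_swap.2 (hs p hp q hq)
  have hsA' : ∀ p ∈ s.image Prod.swap, p.2 ∈ A := by
    simp only [Finset.mem_image]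
    rintro _ ⟨p, hp, rfl⟩
    exact hsA p hp
  obtain ⟨x, hx, hxs⟩ := hA.exists_isometricPairs_snd hs' hsA' y
  exact ⟨x, hx, fun q hq => isometricPairs_swap.1 (hxs q.swap (Finset.mem_image_of_mem _ hq))⟩

def CylinderIsometry (f : (∀ n, E n) → ∀ n, E n) : Prop :=
  ∀ x y n, x ∈ cylinder y n ↔ f x ∈ cylinder (f y) n

theorem exists_cylinderIsometry_of_dense [∀ n, TopologicalSpace (E n)]
    [∀ n, DiscreteTopology (E n)] {R : Set ((∀ n, E n) × (∀ n, E n))}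
    (hR : ∀ p ∈ R, ∀ q ∈ R, IsometricPairs p q) (hdense : Dense (Prod.fst '' R)) :
    ∃ f, CylinderIsometry f ∧ ∀ p ∈ R, f p.1 = p.2 := by
  have happrox : ∀ z n, ∃ p ∈ R, p.1 ∈ cylinder z n := fun z n => by
    obtain ⟨_, ⟨p, hp, rfl⟩, hpz⟩ := hdense.exists_mem_cylinder z n
    exact ⟨p, hp, hpz⟩
  choose p hpR hpz using happrox
  set f : (∀ n, E n) → ∀ n, E n := fun z i => (p z (i + 1)).2 i
  have hf_image : ∀ q ∈ R, ∀ i, (p q.1 (i + 1)).2 i = q.2 i := fun q hq i =>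
    (hR _ (hpR _ _) q hq _).1 (hpz q.1 (i + 1)) i i.lt_succ_self
  have hf_cyl : ∀ z n, f z ∈ cylinder (p z n).2 n := by
    intro z n i hi
    refine (hR _ (hpR z (i + 1)) _ (hpR z n) (i + 1)).1 ?_ i i.lt_succ_self
    rw [mem_cylinder_iff_eq, mem_cylinder_iff_eq.1 (hpz z (i + 1)),
      mem_cylinder_iff_eq.1 (cylinder_anti _ hi (hpz z n))]
  refine ⟨f, fun x y n => ?_, fun q hq => funext (hf_image q hq)⟩
  rw [mem_cylinder_iff_eq, mem_cylinder_iff_eq, ← mem_cylinder_iff_eq.1 (hpz x n),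
    ← mem_cylinder_iff_eq.1 (hpz y n), mem_cylinder_iff_eq.1 (hf_cyl x n),
    mem_cylinder_iff_eq.1 (hf_cyl y n), ← mem_cylinder_iff_eq, ← mem_cylinder_iff_eq]
  exact hR _ (hpR x n) _ (hpR y n) n

end PiNat

theorem stmt_3_general {X : Type*} [Nonempty X]
    [TopologicalSpace X] [DiscreteTopology X]
    (A B : Set (ℕ → X)) (hAc : A.Countable) (hBc : B.Countable)
    (hAd : Dense A) (hBd : Dense B) :
    ∃ f : (ℕ → X) → (ℕ → X),
      (∀ x y : ℕ → X, ∀ n : ℕ, (∀ i < n, x i = y i) ↔ (∀ i < n, f x i = f y i)) ∧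
      f '' A = B := by
  obtain ⟨a, rfl⟩ := hAc.exists_eq_range hAd.nonempty
  obtain ⟨b, rfl⟩ := hBc.exists_eq_range hBd.nonempty
  obtain ⟨R, hR, hRa, hRb⟩ := exists_pairwise_of_back_and_forth
    isometricPairs_refl (fun _ _ => IsometricPairs.symm) a b
    (fun s hs hsab x _ => hBd.exists_isometricPairs_snd hs (fun p hp => (hsab hp).2) x)
    (fun s hs hsab y _ => hAd.exists_isometricPairs_fst hs (fun p hp => (hsab hp).1) y)
  obtain ⟨f, hf, hfR⟩ := exists_cylinderIsometry_of_dense hR (hRa ▸ hAd)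
  refine ⟨f, hf, ?_⟩
  rw [← hRa, ← hRb, image_image]
  exact image_congr hfR

/-- For a nonempty countable discrete `X`, any two countable dense subsets of `ℕ → X`
(with the product topology) are mapped onto each other by an isometry of the whole space. -/
theorem stmt_3 {X : Type*} [Nonempty X] [Countable X]
    [TopologicalSpace X] [DiscreteTopology X]
    (A B : Set (ℕ → X)) (hAc : A.Countable) (hBc : B.Countable)
    (hAd : Dense A) (hBd : Dense B) :
    ∃ f : (ℕ → X) → (ℕ → X),
      (∀ x y : ℕ → X, ∀ n : ℕ, (∀ i < n, x i = y i) ↔ (∀ i < n, f x i = f y i)) ∧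
      f '' A = B :=
  stmt_3_general A B hAc hBc hAd hBd
end

section
/- Let κ be a cardinal with ℵ1 ≤ κ ≤ 2^ℵ0. Then there exist sets O, E ⊆ ℕ → ℕ, each κ-dense (for every nonempty open U, the cardinality of O ∩ U equals κ, and likewise for E), such that: for every A ⊆ O with ℵ1 ≤ #A and every f : (ℕ → ℕ) → (ℕ → ℕ) with f '' A ⊆ E, f is not an isometry on A (there exist x, y ∈ A and n such that it is not the case that x and y agree below n iff f x and f y agree below n); and symmetrically, for every A ⊆ E with ℵ1 ≤ #A and every f with f '' A ⊆ O, f is not an isometry on A. -/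
/-!
Take `O` inside the sequences that vanish at all large even positions and `E` inside those
that vanish at all large odd positions: every cylinder contains `2^ℵ₀` sequences of either kind,
so both kinds contain `κ`-dense sets. If `f` maps an uncountable `A ⊆ O` into `E` and is an
isometry on `A`, then, by pigeonhole, uncountably many `x ∈ A` share a bound `N` beyond which
`x` vanishes at even and `f x` at odd positions, and two of them, `x ≠ y`, agree below `N`.
An isometry preserves the first index `d ≥ N` where `x` and `y` differ, so `x d ≠ y d` and
`f x d ≠ f y d`; but one of these pairs is `0, 0`, according to the parity of `d`.
-/

open Cardinal Set Filter PiNat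

def eventuallyZeroOn (S : Set ℕ) : Set (ℕ → ℕ) :=
  {x | ∀ᶠ i in atTop, i ∈ S → x i = 0}

def PreservesAgreement (f : (ℕ → ℕ) → (ℕ → ℕ)) (A : Set (ℕ → ℕ)) : Prop :=
  ∀ x ∈ A, ∀ y ∈ A, ∀ n, (∀ i < n, x i = y i) ↔ (∀ i < n, f x i = f y i)

section Isometry

variable {f : (ℕ → ℕ) → (ℕ → ℕ)} {A : Set (ℕ → ℕ)}

theorem PreservesAgreement.map_ne (hf : PreservesAgreement f A) {x y : ℕ → ℕ}
    (hx : x ∈ A) (hy : y ∈ A) (hxy : x ≠ y) : f x ≠ f y := by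
  intro h
  exact hxy (funext fun i => (hf x hx y hy (i + 1)).2 (fun j _ => congrFun h j) i i.lt_succ_self)

theorem PreservesAgreement.firstDiff_map (hf : PreservesAgreement f A) {x y : ℕ → ℕ}
    (hx : x ∈ A) (hy : y ∈ A) (hxy : x ≠ y) : firstDiff (f x) (f y) = firstDiff x y := by
  refine eq_of_forall_le_iff fun n => ?_
  rw [← mem_cylinder_iff_le_firstDiff hxy,
    ← mem_cylinder_iff_le_firstDiff (hf.map_ne hx hy hxy)]
  exact (hf x hx y hy n).symm

end Isometry

theorem exists_not_countable_inter_of_subset_iUnion {α : Type*} {A : Set α} (hA : ¬ A.Countable)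
    {B : ℕ → Set α} (hAB : A ⊆ ⋃ N, B N) : ∃ N, ¬ (A ∩ B N).Countable := by
  by_contra! h
  exact hA ((countable_iUnion h).mono fun x hx => by simpa [hx] using hAB hx)

theorem exists_ne_agree_below_of_not_countable {α : Type*} [Countable α] {A : Set (ℕ → α)}
    (hA : ¬ A.Countable) (N : ℕ) : ∃ x ∈ A, ∃ y ∈ A, x ≠ y ∧ x ∈ cylinder y N := by
  by_contra! h
  refine hA ((mapsTo_univ (fun x (i : Fin N) => x i) A).countable_of_injOn ?_ countable_univ)
  intro x hx y hy hxy
  by_contra hne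
  exact h x hx y hy hne fun i hi => congrFun hxy ⟨i, hi⟩

theorem not_preservesAgreement_of_not_countable {S T : Set ℕ} (hST : ∀ i, i ∈ S ∨ i ∈ T)
    {A : Set (ℕ → ℕ)} (hAS : A ⊆ eventuallyZeroOn S) (hA : ¬ A.Countable)
    {f : (ℕ → ℕ) → (ℕ → ℕ)} (hfT : MapsTo f A (eventuallyZeroOn T)) :
    ¬ PreservesAgreement f A := by
  intro hf
  obtain ⟨N, hN⟩ := exists_not_countable_inter_of_subset_iUnion hA
    (B := fun N => {x | ∀ i ≥ N, (i ∈ S → x i = 0) ∧ (i ∈ T → f x i = 0)})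
    fun x hx => mem_iUnion.2 (eventually_atTop.1 ((hAS hx).and (hfT hx)))
  obtain ⟨x, ⟨hxA, hx⟩, y, ⟨hyA, hy⟩, hxy, hxyN⟩ :=
    exists_ne_agree_below_of_not_countable hN N
  have hd : N ≤ firstDiff x y := (mem_cylinder_iff_le_firstDiff hxy N).1 hxyN
  rcases hST (firstDiff x y) with hS | hT
  · exact apply_firstDiff_ne hxy (((hx _ hd).1 hS).trans ((hy _ hd).1 hS).symm)
  · refine apply_firstDiff_ne (hf.map_ne hxA hyA hxy) ?_
    rw [hf.firstDiff_map hxA hyA hxy]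
    exact ((hx _ hd).2 hT).trans ((hy _ hd).2 hT).symm

theorem exists_dense_subset {X : Type*} [TopologicalSpace X] [SecondCountableTopology X]
    {D : Set X} {κ : Cardinal} (hκ : ℵ₀ ≤ κ)
    (hD : ∀ U : Set X, IsOpen U → U.Nonempty → κ ≤ #↥(D ∩ U)) :
    ∃ O ⊆ D, ∀ U : Set X, IsOpen U → U.Nonempty → #↥(O ∩ U) = κ := by
  obtain ⟨B, hBc, hB0, hB⟩ := TopologicalSpace.exists_countable_basis X
  have hP : ∀ b : B, ∃ P ⊆ D ∩ b, #P = κ := fun b =>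
    le_mk_iff_exists_subset.1 <|
      hD b (hB.isOpen b.2) (nonempty_iff_ne_empty.2 fun h => hB0 (h ▸ b.2))
  choose P hPD hPκ using hP
  refine ⟨⋃ b, P b, iUnion_subset fun b => (hPD b).trans inter_subset_left,
    fun U hU ⟨x, hx⟩ => ?_⟩
  obtain ⟨b, hb, -, hbU⟩ := hB.exists_subset_of_mem_open hx hU
  refine le_antisymm ?_ ?_
  · calc #↥((⋃ b, P b) ∩ U) ≤ #↥(⋃ b, P b) := mk_le_mk_of_subset inter_subset_left
      _ ≤ #B * ⨆ b, #(P b) := mk_iUnion_le P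
      _ ≤ ℵ₀ * κ :=
        mul_le_mul' (le_aleph0_iff_set_countable.2 hBc) (ciSup_le' fun b => (hPκ b).le)
      _ = κ := aleph0_mul_eq hκ
  · rw [← hPκ ⟨b, hb⟩]
    exact mk_le_mk_of_subset fun z hz =>
      ⟨mem_iUnion.2 ⟨_, hz⟩, hbU ((hPD ⟨b, hb⟩ hz).2)⟩

theorem two_power_aleph0_le_mk_eventuallyZeroOn_inter {S : Set ℕ} (hS : Sᶜ.Infinite)
    {U : Set (ℕ → ℕ)} (hU : IsOpen U) (hne : U.Nonempty) :
    2 ^ ℵ₀ ≤ #↥(eventuallyZeroOn S ∩ U) := by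
  obtain ⟨x, hx⟩ := hne
  obtain ⟨_, ⟨y, n, rfl⟩, -, hyU⟩ :=
    (isTopologicalBasis_cylinders fun _ => ℕ).exists_subset_of_mem_open hx hU
  set T := Sᶜ \ Iio n
  have : Infinite T := (hS.sdiff (finite_Iio n)).to_subtype
  classical
  let e : (T → ℕ) → ℕ → ℕ := fun t i =>
    if h : i ∈ T then t ⟨i, h⟩ else if i < n then y i else 0
  have he : ∀ t, e t ∈ eventuallyZeroOn S ∩ cylinder y n := fun t =>
    ⟨eventually_atTop.2 ⟨n, fun i hi hiS => by simp [e, T, hiS, hi.not_gt]⟩,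
      fun i hi => by simp [e, T, hi]⟩
  have he_inj : Function.Injective e := fun t t' h => funext fun i => by
    simpa [e] using congrFun h i
  calc (2 : Cardinal) ^ ℵ₀ = #(T → ℕ) := by
        rw [← power_def, mk_nat, mk_eq_aleph0, two_power_aleph0, aleph0_power_aleph0]
    _ ≤ #↥(eventuallyZeroOn S ∩ cylinder y n) :=
      mk_le_of_injective (he_inj.codRestrict he)
    _ ≤ #↥(eventuallyZeroOn S ∩ U) := mk_le_mk_of_subset (inter_subset_inter_right _ hyU)

/-- For any cardinal `κ` with `ℵ₁ ≤ κ ≤ 2^ℵ₀` there are `κ`-dense sets `O, E ⊆ ℕ → ℕ`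
such that no function mapping an uncountable subset of one into the other is an isometry
on that subset. -/
theorem stmt_4 (κ : Cardinal.{0}) (h1 : Cardinal.aleph 1 ≤ κ)
    (h2 : κ ≤ 2 ^ Cardinal.aleph0) :
    ∃ O E : Set (ℕ → ℕ),
      (∀ U : Set (ℕ → ℕ), IsOpen U → U.Nonempty → Cardinal.mk ↥(O ∩ U) = κ) ∧
      (∀ U : Set (ℕ → ℕ), IsOpen U → U.Nonempty → Cardinal.mk ↥(E ∩ U) = κ) ∧
      (∀ A : Set (ℕ → ℕ), A ⊆ O → Cardinal.aleph 1 ≤ Cardinal.mk ↥A →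
        ∀ f : (ℕ → ℕ) → (ℕ → ℕ), f '' A ⊆ E →
          ∃ x ∈ A, ∃ y ∈ A, ∃ n : ℕ,
            ¬ ((∀ i < n, x i = y i) ↔ (∀ i < n, f x i = f y i))) ∧
      (∀ A : Set (ℕ → ℕ), A ⊆ E → Cardinal.aleph 1 ≤ Cardinal.mk ↥A →
        ∀ f : (ℕ → ℕ) → (ℕ → ℕ), f '' A ⊆ O →
          ∃ x ∈ A, ∃ y ∈ A, ∃ n : ℕ,
            ¬ ((∀ i < n, x i = y i) ↔ (∀ i < n, f x i = f y i))) := by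
  have hκ : ℵ₀ ≤ κ := (aleph0_le_aleph 1).trans h1
  have hevens_compl : {i : ℕ | Even i}ᶜ.Infinite :=
    infinite_of_injective_forall_mem (f := fun n => 2 * n + 1) (fun a b h => by simpa using h)
      fun n => by simp
  have hodds_compl : {i : ℕ | Odd i}ᶜ.Infinite :=
    infinite_of_injective_forall_mem (f := fun n => 2 * n) (fun a b h => by simpa using h)
      fun n => by simp
  obtain ⟨O, hO, hOκ⟩ := exists_dense_subset hκ fun U hU hne =>
    h2.trans (two_power_aleph0_le_mk_eventuallyZeroOn_inter hevens_compl hU hne)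
  obtain ⟨E, hE, hEκ⟩ := exists_dense_subset hκ fun U hU hne =>
    h2.trans (two_power_aleph0_le_mk_eventuallyZeroOn_inter hodds_compl hU hne)
  have huncount {A : Set (ℕ → ℕ)} (hA : aleph 1 ≤ #A) : ¬ A.Countable := fun hc =>
    (aleph0_lt_aleph_one.trans_le (hA.trans (le_aleph0_iff_set_countable.2 hc))).false
  refine ⟨O, E, hOκ, hEκ, fun A hA hA1 f hf => ?_, fun A hA hA1 f hf => ?_⟩
  · simpa only [PreservesAgreement, not_forall, exists_prop] using
      not_preservesAgreement_of_not_countable (S := {i | Even i}) (T := {i | Odd i})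
        Nat.even_or_odd (hA.trans hO) (huncount hA1)
        (mapsTo_iff_image_subset.2 (hf.trans hE))
  · simpa only [PreservesAgreement, not_forall, exists_prop] using
      not_preservesAgreement_of_not_countable (S := {i | Odd i}) (T := {i | Even i})
        (fun i => (Nat.even_or_odd i).symm) (hA.trans hE) (huncount hA1)
        (mapsTo_iff_image_subset.2 (hf.trans hO))
end

section
/- Let f : (ℕ → Bool) → (ℕ → Bool) be Lipschitz, i.e. for all x, y : ℕ → Bool and all n, if x and y agree below n then f x and f y agree below n. Then f is surjective if and only if f is an isometry, i.e. for all x, y and all n, x and y agree below n if and only if f x and f y agree below n. -/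
/-!
A Lipschitz map `f` induces, for every `n`, a self-map of the finite set of length-`n` prefixes,
sending the prefix of `x` to the prefix of `f x`. Since these sets are finite, each such map is
injective iff it is surjective. Surjectivity of `f` makes them all surjective, and injectivity of
all of them is exactly the isometry property. Conversely, if they are all surjective then the range
of `f` meets every cylinder, so it is dense; it is also compact, since `f` is continuous, hence
closed, so `f` is surjective.
-/

open Function Filter Topology

namespace CantorSpace

variable {α : Type*}

def AgreeBelow (n : ℕ) (x y : ℕ → α) : Prop := ∀ i < n, x i = y i

def IsLipschitz (f : (ℕ → α) → (ℕ → α)) : Prop :=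
  ∀ x y n, AgreeBelow n x y → AgreeBelow n (f x) (f y)

def IsIsometry (f : (ℕ → α) → (ℕ → α)) : Prop :=
  ∀ x y n, AgreeBelow n x y ↔ AgreeBelow n (f x) (f y)

def take (n : ℕ) (x : ℕ → α) : Fin n → α := fun i => x i

theorem agreeBelow_iff_take_eq {n : ℕ} {x y : ℕ → α} :
    AgreeBelow n x y ↔ take n x = take n y :=
  ⟨fun h => funext fun i => h i i.isLt, fun h i hi => congrFun h ⟨i, hi⟩⟩

section Prefixes

variable [Inhabited α]

def ofPrefix {n : ℕ} (s : Fin n → α) : ℕ → α := fun i =>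
  if h : i < n then s ⟨i, h⟩ else default

@[simp]
theorem take_ofPrefix {n : ℕ} (s : Fin n → α) : take n (ofPrefix s) = s :=
  funext fun i => dif_pos i.isLt

theorem agreeBelow_ofPrefix_take (n : ℕ) (x : ℕ → α) :
    AgreeBelow n (ofPrefix (take n x)) x :=
  agreeBelow_iff_take_eq.2 (take_ofPrefix _)

def prefixMap (f : (ℕ → α) → (ℕ → α)) (n : ℕ) (s : Fin n → α) : Fin n → α :=
  take n (f (ofPrefix s))

variable {f : (ℕ → α) → (ℕ → α)}

theorem IsLipschitz.prefixMap_take (hf : IsLipschitz f) (n : ℕ) (x : ℕ → α) :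
    prefixMap f n (take n x) = take n (f x) :=
  agreeBelow_iff_take_eq.1 (hf _ _ n (agreeBelow_ofPrefix_take n x))

theorem IsLipschitz.surjective_prefixMap (hf : IsLipschitz f) (hs : Surjective f) (n : ℕ) :
    Surjective (prefixMap f n) := fun s => by
  obtain ⟨x, hx⟩ := hs (ofPrefix s)
  exact ⟨take n x, by rw [hf.prefixMap_take, hx, take_ofPrefix]⟩

theorem IsLipschitz.isIsometry_iff_injective_prefixMap (hf : IsLipschitz f) :
    IsIsometry f ↔ ∀ n, Injective (prefixMap f n) := by
  constructor
  · intro hiso n s t hst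
    have hagree := (hiso _ _ n).2 (agreeBelow_iff_take_eq.2 hst)
    simpa only [take_ofPrefix] using agreeBelow_iff_take_eq.1 hagree
  · intro hinj x y n
    refine ⟨hf x y n, fun hfxy => agreeBelow_iff_take_eq.2 (hinj n ?_)⟩
    rw [hf.prefixMap_take, hf.prefixMap_take, ← agreeBelow_iff_take_eq]
    exact hfxy

end Prefixes

section Topology

variable [TopologicalSpace α] [DiscreteTopology α]

theorem eventually_agreeBelow (n : ℕ) (x : ℕ → α) : ∀ᶠ y in 𝓝 x, AgreeBelow n y x :=
  (PiNat.isOpen_cylinder (E := fun _ => α) x n).mem_nhds (PiNat.self_mem_cylinder x n)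

theorem IsLipschitz.continuous {f : (ℕ → α) → (ℕ → α)} (hf : IsLipschitz f) :
    Continuous f :=
  continuous_pi fun i => IsLocallyConstant.continuous <|
    (IsLocallyConstant.iff_eventually_eq _).2 fun x =>
      (eventually_agreeBelow (i + 1) x).mono fun y hy => hf y x (i + 1) hy i i.lt_succ_self

theorem surjective_of_forall_agreeBelow {X : Type*} [TopologicalSpace X] [CompactSpace X]
    {f : X → ℕ → α} (hf : Continuous f) (h : ∀ y n, ∃ x, AgreeBelow n (f x) y) :
    Surjective f := fun y => by
  choose x hx using fun n => h y n
  have hlim : Tendsto (fun n => f (x n)) atTop (𝓝 y) :=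
    tendsto_pi_nhds.2 fun i =>
      tendsto_atTop_of_eventually_const fun n (hn : i + 1 ≤ n) => hx n i hn
  exact (isCompact_range hf).isClosed.mem_of_tendsto hlim
    (Eventually.of_forall fun n => ⟨x n, rfl⟩)

theorem IsLipschitz.surjective_iff_isIsometry [Finite α] [Inhabited α]
    {f : (ℕ → α) → (ℕ → α)} (hf : IsLipschitz f) : Surjective f ↔ IsIsometry f := by
  rw [hf.isIsometry_iff_injective_prefixMap]
  refine ⟨fun hs n => Finite.injective_iff_surjective.2 (hf.surjective_prefixMap hs n),
    fun hinj => surjective_of_forall_agreeBelow hf.continuous fun y n => ?_⟩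
  obtain ⟨s, hs⟩ := Finite.injective_iff_surjective.1 (hinj n) (take n y)
  exact ⟨ofPrefix s, agreeBelow_iff_take_eq.2 hs⟩

end Topology

end CantorSpace

/-- A Lipschitz function on Cantor space `ℕ → Bool` is surjective iff it is an isometry. -/
theorem stmt_5 (f : (ℕ → Bool) → (ℕ → Bool))
    (hf : ∀ x y : ℕ → Bool, ∀ n : ℕ, (∀ i < n, x i = y i) → ∀ i < n, f x i = f y i) :
    Function.Surjective f ↔
      ∀ x y : ℕ → Bool, ∀ n : ℕ, (∀ i < n, x i = y i) ↔ (∀ i < n, f x i = f y i) :=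
  CantorSpace.IsLipschitz.surjective_iff_isIsometry hf
end

section
/- BA_Lip(ω^ω) implies BA_Lip(2^ω): if for all ℵ1-dense A, B ⊆ ℕ → ℕ there is a Lipschitz f : (ℕ → ℕ) → (ℕ → ℕ) which is injective on A and satisfies f '' A ⊆ B, then for all ℵ1-dense A, B ⊆ ℕ → Bool there is a Lipschitz f : (ℕ → Bool) → (ℕ → Bool) which is injective on A and satisfies f '' A ⊆ B. -/
/-!
Compose a Baire-space reduction with coordinatewise maps: `e z n = (z n).toNat` embeds Cantor
space into Baire space, `p x n = decide (x n = 1)` projects back, and `p ∘ f ∘ e` is Lipschitz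
whenever `f` is. It remains to find an `ℵ₁`-dense `S ⊆ ω^ω` on which `p` is injective with
`p '' S ⊆ B`, and to apply the hypothesis to `e '' A ∪ S` and `S`. For each finite sequence `s`
choose `ℵ₁` points of `B` in the binary cylinder `p s`, the choices for distinct `s` disjoint (a
recursion of length `ω₁`, possible because initial segments are countable), and replace the first
`s.length` coordinates of each by `s`.
-/

/-- A set `S` in a topological space is `ℵ₁`-dense if its intersection with every nonempty
open set has cardinality `ℵ₁`. -/
def Aleph1Dense {Z : Type*} [TopologicalSpace Z] (S : Set Z) : Prop :=
  ∀ U : Set Z, IsOpen U → U.Nonempty → Cardinal.mk ↥(S ∩ U) = Cardinal.aleph 1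

/-- `f` is Lipschitz: if `x` and `y` agree below `n` then so do `f x` and `f y`. -/
def IsLip {X : ℕ → Type*} (f : (∀ n, X n) → (∀ n, X n)) : Prop :=
  ∀ x y : ∀ n, X n, ∀ n : ℕ, (∀ i < n, x i = y i) → ∀ i < n, f x i = f y i

open Cardinal Set Function PiNat

universe u

theorem exists_injective_forall_mem_of_mk_Iio_lt {T X : Type u} [LinearOrder T]
    [WellFoundedLT T] (B : T → Set X) (hB : ∀ t, #(Iio t) < #(B t)) :
    ∃ g : T → X, Injective g ∧ ∀ t, g t ∈ B t := by
  have hnext : ∀ t (prev : ∀ s, s < t → X), ∃ x ∈ B t, ∀ s hs, prev s hs ≠ x := by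
    intro t prev
    have hsmall : #(range fun s : Iio t => prev s s.2) < #(B t) := mk_range_le.trans_lt (hB t)
    obtain ⟨x, hx, hxprev⟩ := not_subset.mp fun h => (mk_le_mk_of_subset h).not_gt hsmall
    exact ⟨x, hx, fun s hs h => hxprev ⟨⟨s, hs⟩, h⟩⟩
  choose next hnext_mem hnext_ne using hnext
  let g := wellFounded_lt.fix next
  have hg : ∀ t, g t = next t fun s _ => g s := wellFounded_lt.fix_eq next
  refine ⟨g, fun s t hst => ?_, fun t => hg t ▸ hnext_mem _ _⟩
  by_contra hne
  rcases lt_or_gt_of_ne hne with h | h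
  · exact hnext_ne t (fun s _ => g s) s h (hst.trans (hg t))
  · exact hnext_ne s (fun s _ => g s) t h (hst.symm.trans (hg s))

theorem exists_disjoint_subsets_mk_eq {X ι : Type u} {κ : Cardinal.{u}} (hκ : ℵ₀ ≤ κ)
    (hι : #ι ≤ κ) (B : ι → Set X) (hB : ∀ i, κ ≤ #(B i)) :
    ∃ O : ι → Set X, (∀ i, O i ⊆ B i) ∧ (∀ i, #(O i) = κ) ∧ Pairwise (Disjoint on O) := by
  rcases isEmpty_or_nonempty ι with hι0 | hι0
  · exact ⟨isEmptyElim, isEmptyElim, isEmptyElim, fun i => isEmptyElim i⟩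
  let T := κ.ord.ToType
  obtain ⟨e⟩ : Nonempty (T ≃ T × ι) := Cardinal.eq.1 <| by
    rw [mk_prod, lift_id, lift_id, mk_ord_toType, mul_eq_left hκ hι (mk_ne_zero ι)]
  obtain ⟨g, hg, hgB⟩ := exists_injective_forall_mem_of_mk_Iio_lt (fun t => B (e t).2)
    fun t => (by simpa using mk_Iio_lt (α := κ.ord.ToType) t : #(Iio t) < κ).trans_le (hB _)
  have hfiber : ∀ i, {t | (e t).2 = i} ≃ T := fun i =>
    { toFun := fun t => (e t.1).1
      invFun := fun s => ⟨e.symm (s, i), by simp⟩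
      left_inv := fun ⟨t, ht⟩ => Subtype.ext <| by subst ht; simp
      right_inv := fun s => by simp }
  refine ⟨fun i => g '' {t | (e t).2 = i}, ?_, fun i => ?_, fun i j hij => ?_⟩
  · rintro i _ ⟨t, rfl, rfl⟩
    exact hgB t
  · rw [mk_image_eq hg, mk_congr (hfiber i), mk_ord_toType]
  · exact disjoint_image_of_injective hg <|
      disjoint_left.2 fun t hi hj => hij (hi.symm.trans hj)

theorem IsLip.comp_pointwise {α β : Type*} {f : (ℕ → β) → ℕ → β} (hf : IsLip f) (g : β → α)
    (h : α → β) : IsLip fun z : ℕ → α => g ∘ f (h ∘ z) := fun x y n hxy i hi => by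
  simp only [comp_apply, hf (h ∘ x) (h ∘ y) n (fun j hj => by simp [hxy j hj]) i hi]

section Aleph1Dense

variable {Z : Type u} [TopologicalSpace Z] {S T : Set Z}

theorem Aleph1Dense.mk_le [Nonempty Z] (hS : Aleph1Dense S) : #S ≤ aleph 1 := by
  simpa using (hS univ isOpen_univ univ_nonempty).le

theorem aleph1Dense_of_mk_le (hS : #S ≤ aleph 1)
    (h : ∀ U, IsOpen U → U.Nonempty → aleph 1 ≤ #(S ∩ U : Set Z)) : Aleph1Dense S :=
  fun U hU hne => ((mk_le_mk_of_subset inter_subset_left).trans hS).antisymm (h U hU hne)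

theorem Aleph1Dense.mono (hS : Aleph1Dense S) (hST : S ⊆ T) (hT : #T ≤ aleph 1) :
    Aleph1Dense T :=
  aleph1Dense_of_mk_le hT fun U hU hne =>
    (hS U hU hne).ge.trans (mk_le_mk_of_subset (inter_subset_inter_left U hST))

end Aleph1Dense

theorem aleph1Dense_of_forall_cylinder {E : ℕ → Type u} [∀ n, TopologicalSpace (E n)]
    [∀ n, DiscreteTopology (E n)] {S : Set (∀ n, E n)} (hS : #S ≤ aleph 1)
    (h : ∀ x n, aleph 1 ≤ #(S ∩ cylinder x n : Set _)) : Aleph1Dense S :=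
  aleph1Dense_of_mk_le hS fun U hU ⟨x, hx⟩ => by
    obtain ⟨_, ⟨y, n, rfl⟩, -, hyU⟩ :=
      (isTopologicalBasis_cylinders E).exists_subset_of_mem_open hx hU
    exact (h y n).trans (mk_le_mk_of_subset (inter_subset_inter_right S hyU))

def cantorProj (x : ℕ → ℕ) : ℕ → Bool := fun n => decide (x n = 1)

-- `s` followed by the bits of `z` from position `s.length` on
def baireLift (s : List ℕ) (z : ℕ → Bool) : ℕ → ℕ := fun n => s.getD n (z n).toNat

theorem cantorProj_baireLift {s : List ℕ} {z w : ℕ → Bool}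
    (hz : z ∈ cylinder (cantorProj (baireLift s w)) s.length) :
    cantorProj (baireLift s z) = z := by
  funext n
  by_cases hn : n < s.length
  · simp [hz n hn, cantorProj, baireLift, List.getElem?_eq_getElem hn]
  · simp [cantorProj, baireLift, List.getElem?_eq_none (not_lt.1 hn)]

theorem baireLift_ofFn_mem_cylinder (x : ℕ → ℕ) (n : ℕ) (z : ℕ → Bool) :
    baireLift (List.ofFn fun i : Fin n => x i) z ∈ cylinder x n := fun i hi => by
  simp [baireLift, hi]

theorem Aleph1Dense.exists_lift_injOn_cantorProj {B : Set (ℕ → Bool)} (hB : Aleph1Dense B) :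
    ∃ S : Set (ℕ → ℕ), Aleph1Dense S ∧ InjOn cantorProj S ∧ MapsTo cantorProj S B := by
  let C s := cylinder (cantorProj (baireLift s fun _ => false)) s.length
  obtain ⟨O, hOB, hOcard, hOdisj⟩ := exists_disjoint_subsets_mk_eq (aleph0_le_aleph 1)
    (mk_le_aleph0.trans (aleph0_le_aleph 1)) (fun s => B ∩ C s)
    fun s => (hB _ (isOpen_cylinder _ _ _) ⟨_, self_mem_cylinder _ _⟩).ge
  have hproj : ∀ s, LeftInvOn cantorProj (baireLift s) (O s) := fun s _ hz =>
    cantorProj_baireLift (hOB s hz).2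
  let S := ⋃ s, baireLift s '' O s
  have hinj : InjOn cantorProj S := by
    simp only [S, InjOn, mem_iUnion]
    rintro _ ⟨s, z, hz, rfl⟩ _ ⟨t, w, hw, rfl⟩ h
    rw [hproj s hz, hproj t hw] at h
    subst h
    obtain rfl : s = t := by_contra fun hst => disjoint_left.1 (hOdisj hst) hz hw
    rfl
  have hmaps : MapsTo cantorProj S B := by
    simp only [S, MapsTo, mem_iUnion]
    rintro _ ⟨s, z, hz, rfl⟩
    rw [hproj s hz]
    exact (hOB s hz).1
  refine ⟨S, aleph1Dense_of_forall_cylinder ?_ fun x n => ?_, hinj, hmaps⟩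
  · calc #S = #(cantorProj '' S) := (mk_image_eq_of_injOn _ _ hinj).symm
      _ ≤ #B := mk_le_mk_of_subset hmaps.image_subset
      _ ≤ aleph 1 := hB.mk_le
  · let s := List.ofFn fun i : Fin n => x i
    calc aleph 1 = #(baireLift s '' O s) :=
          ((mk_image_eq_of_injOn _ _ (hproj s).injOn).trans (hOcard s)).symm
      _ ≤ #(S ∩ cylinder x n : Set _) := mk_le_mk_of_subset <| by
        rintro _ ⟨z, hz, rfl⟩
        exact ⟨mem_iUnion.2 ⟨s, z, hz, rfl⟩, baireLift_ofFn_mem_cylinder x n z⟩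

/-- `BA_Lip(ω^ω)` implies `BA_Lip(2^ω)`. -/
theorem stmt_8
    (hBA : ∀ A B : Set (ℕ → ℕ), Aleph1Dense A → Aleph1Dense B →
      ∃ f : (ℕ → ℕ) → (ℕ → ℕ), IsLip f ∧ Set.InjOn f A ∧ f '' A ⊆ B) :
    ∀ A B : Set (ℕ → Bool), Aleph1Dense A → Aleph1Dense B →
      ∃ f : (ℕ → Bool) → (ℕ → Bool), IsLip f ∧ Set.InjOn f A ∧ f '' A ⊆ B := by
  intro A B hA hB
  obtain ⟨S, hS, hSinj, hSB⟩ := hB.exists_lift_injOn_cantorProj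
  let e : (ℕ → Bool) → ℕ → ℕ := (Bool.toNat ∘ ·)
  have he : Injective e := Injective.comp_left fun a b h => by cases a <;> cases b <;> simp_all
  have hA' : Aleph1Dense (e '' A ∪ S) := hS.mono subset_union_right <|
    (mk_union_le _ _).trans <|
      add_le_of_le (aleph0_le_aleph 1) (mk_image_le.trans hA.mk_le) hS.mk_le
  obtain ⟨f, hf, hfinj, hfS⟩ := hBA _ S hA' hS
  have hfS' : MapsTo (f ∘ e) A S := fun z hz => hfS ⟨e z, Or.inl ⟨z, hz, rfl⟩, rfl⟩
  refine ⟨cantorProj ∘ f ∘ e, hf.comp_pointwise (fun k => decide (k = 1)) Bool.toNat, ?_,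
    (hSB.comp hfS').image_subset⟩
  exact hSinj.comp (hfinj.comp he.injOn fun z hz => Or.inl ⟨z, hz, rfl⟩) hfS'
end

section
/- Let π : (ℕ → ℕ) → (ℕ → Bool) be the parity map, π(b)(k) = true iff b k is odd. For every ℵ1-dense B ⊆ ℕ → Bool there exists an ℵ1-dense B' ⊆ ℕ → ℕ such that π restricted to B' is a bijection from B' onto B. -/
/-- The parity map `π : (ℕ → ℕ) → (ℕ → Bool)`, `π b k = true` iff `b k` is odd. -/
def parity (b : ℕ → ℕ) : ℕ → Bool := fun k => decide (Odd (b k))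

namespace Stmt9Aux

open Cardinal Set

/-- every open set in a countable product contains an initial-segment cylinder -/
lemma cyl_subset_of_isOpen {α : Type*} [TopologicalSpace α] {U : Set (ℕ → α)} (hU : IsOpen U)
    {x : ℕ → α} (hx : x ∈ U) : ∃ n, {y : ℕ → α | ∀ k < n, y k = x k} ⊆ U := by
  classical
  obtain ⟨I, u, h1, h2⟩ := isOpen_pi_iff.mp hU x hx
  set n : ℕ := if h : I.Nonempty then I.max' h + 1 else 0 with hn
  refine ⟨n, fun y hy => h2 fun i hi => ?_⟩
  have hIne : I.Nonempty := ⟨i, hi⟩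
  have hin : i < n := by
    rw [hn, dif_pos hIne]; exact Nat.lt_succ_of_le (I.le_max' i hi)
  rw [hy i hin]
  exact (h1 i hi).2

lemma isOpen_cyl {α : Type*} [TopologicalSpace α] [DiscreteTopology α] (x : ℕ → α) (n : ℕ) :
    IsOpen {y : ℕ → α | ∀ k < n, y k = x k} := by
  have : {y : ℕ → α | ∀ k < n, y k = x k}
      = ⋂ k : Fin n, (fun y : ℕ → α => y (k : ℕ)) ⁻¹' {x (k : ℕ)} := by
    ext y
    simp [Set.mem_iInter, Fin.forall_iff]
  rw [this]
  exact isOpen_iInter_of_finite fun k =>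
    (continuous_apply (k : ℕ)).isOpen_preimage _ (isOpen_discrete _)

/-- disjoint refinement of countably many sets of size `≥ ℵ₁` -/
lemma exists_disjoint_family {X : Type*} (S : ℕ → Set X)
    (hS : ∀ n, Cardinal.aleph 1 ≤ #(S n)) :
    ∃ f : ℕ → Set X, (∀ n, f n ⊆ S n) ∧ (∀ m n, m ≠ n → Disjoint (f m) (f n)) ∧
      ∀ n, Cardinal.aleph 1 ≤ #(f n) := by
  classical
  let W := (Cardinal.aleph 1).ord.ToType
  let r : W × ℕ → W × ℕ → Prop := Prod.Lex (· < ·) (· < ·)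
  have wf : WellFounded r := WellFounded.prod_lex wellFounded_lt wellFounded_lt
  have hpred : ∀ p : W × ℕ, #{q : W × ℕ // r q p} ≤ Cardinal.aleph0 := by
    rintro ⟨α, m⟩
    have hIio : (Set.Iio α).Countable := by
      rw [Cardinal.countable_iff_lt_aleph_one]
      exact Cardinal.mk_Iio_ord_toType α
    have hsub : {q : W × ℕ | r q (α, m)} ⊆
        (Set.Iio α ×ˢ (Set.univ : Set ℕ)) ∪ ({α} ×ˢ (Set.univ : Set ℕ)) := by
      rintro ⟨β, k⟩ hq
      cases hq with
      | left _ _ h => exact Or.inl ⟨h, trivial⟩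
      | right _ h => exact Or.inr ⟨rfl, trivial⟩
    have hc : ({q : W × ℕ | r q (α, m)}).Countable :=
      Set.Countable.mono hsub
        ((hIio.prod Set.countable_univ).union ((Set.countable_singleton α).prod
          Set.countable_univ))
    exact (Cardinal.mk_le_aleph0_iff.mpr hc.to_subtype)
  have key : ∀ (p : W × ℕ) (IH : ∀ q, r q p → X),
      (S p.2 \ Set.range (fun q : {q // r q p} => IH q q.2)).Nonempty := by
    intro p IH
    rw [Set.nonempty_iff_ne_empty]
    intro h
    have hsub : S p.2 ⊆ Set.range (fun q : {q // r q p} => IH q q.2) := by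
      intro x hx
      by_contra hx'
      exact Set.eq_empty_iff_forall_notMem.mp h x ⟨hx, hx'⟩
    have hle : #(S p.2) ≤ Cardinal.aleph0 :=
      ((Cardinal.mk_le_mk_of_subset hsub).trans Cardinal.mk_range_le).trans (hpred p)
    exact absurd ((hS p.2).trans hle) (not_le.mpr Cardinal.aleph0_lt_aleph_one)
  let F : W × ℕ → X := wf.fix (fun p IH => (key p IH).some)
  have hFeq : ∀ p, F p = (key p (fun q _ => F q)).some := fun p => wf.fix_eq _ p
  have hFmem : ∀ p, F p ∈ S p.2 ∧ ∀ q, r q p → F q ≠ F p := by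
    intro p
    have h := (key p (fun q _ => F q)).some_mem
    rw [← hFeq p] at h
    exact ⟨h.1, fun q hq hne => h.2 ⟨⟨q, hq⟩, hne⟩⟩
  have hFinj : Function.Injective F := by
    rintro ⟨a, i⟩ ⟨b, j⟩ h
    by_contra hne
    have htri : r (a, i) (b, j) ∨ r (b, j) (a, i) := by
      rcases lt_trichotomy a b with h1 | h1 | h1
      · exact Or.inl (Prod.Lex.left _ _ h1)
      · subst h1
        rcases lt_trichotomy i j with h2 | h2 | h2
        · exact Or.inl (Prod.Lex.right _ h2)
        · exact absurd (by rw [h2]) hne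
        · exact Or.inr (Prod.Lex.right _ h2)
      · exact Or.inr (Prod.Lex.left _ _ h1)
    rcases htri with h' | h'
    · exact (hFmem (b, j)).2 _ h' h
    · exact (hFmem (a, i)).2 _ h' h.symm
  refine ⟨fun n => Set.range (fun α : W => F (α, n)), ?_, ?_, ?_⟩
  · rintro n x ⟨α, rfl⟩
    exact (hFmem (α, n)).1
  · intro m n hmn
    rw [Set.disjoint_left]
    rintro x ⟨α, rfl⟩ ⟨β, hβ⟩
    exact hmn (congrArg Prod.snd (hFinj hβ)).symm
  · intro n
    have hinj : Function.Injective (fun α : W => F (α, n)) := fun a b h => by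
      have := hFinj h
      exact congrArg Prod.fst this
    have heq : #(Set.range (fun α : W => F (α, n))) = Cardinal.aleph 1 := by
      rw [Cardinal.mk_range_eq _ hinj]
      exact Cardinal.mk_ord_toType _
    exact heq.ge

/-- compatibility of a Baire-space prefix with a Cantor-space point -/
def Compat (t : List ℕ) (b : ℕ → Bool) : Prop :=
  ∀ k (h : k < t.length), b k = decide (Odd (t.get ⟨k, h⟩))

open scoped Classical in
noncomputable def tb (g : List ℕ → Set (ℕ → Bool)) (b : ℕ → Bool) : List ℕ :=
  if h : ∃ t, b ∈ g t then h.choose else []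

lemma tb_spec (g : List ℕ → Set (ℕ → Bool)) (b : ℕ → Bool) :
    tb g b = [] ∨ b ∈ g (tb g b) := by
  unfold tb
  split
  · next h => exact Or.inr h.choose_spec
  · exact Or.inl rfl

lemma tb_eq {g : List ℕ → Set (ℕ → Bool)}
    (hg : ∀ t t', t ≠ t' → Disjoint (g t) (g t')) {b : ℕ → Bool} {t : List ℕ}
    (hb : b ∈ g t) : tb g b = t := by
  have h : ∃ t, b ∈ g t := ⟨t, hb⟩
  rw [tb, dif_pos h]
  by_contra hne
  exact (Set.disjoint_left.mp (hg _ _ hne) h.choose_spec) hb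

noncomputable def lift (g : List ℕ → Set (ℕ → Bool)) (b : ℕ → Bool) : ℕ → ℕ := fun k =>
  if h : k < (tb g b).length then (tb g b).get ⟨k, h⟩ else (if b k then 1 else 0)

lemma parity_lift (g : List ℕ → Set (ℕ → Bool)) (b : ℕ → Bool)
    (h : Compat (tb g b) b) : parity (lift g b) = b := by
  funext k
  by_cases hk : k < (tb g b).length
  · simp only [parity, lift, dif_pos hk]
    exact (h k hk).symm
  · cases hb : b k <;>
      simp [parity, lift, hk, hb, Nat.odd_iff]

lemma lift_eq_of_mem {g : List ℕ → Set (ℕ → Bool)}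
    (hg : ∀ t t', t ≠ t' → Disjoint (g t) (g t')) {b : ℕ → Bool} {t : List ℕ}
    (hb : b ∈ g t) (k : ℕ) (hk : k < t.length) : lift g b k = t.get ⟨k, hk⟩ := by
  have ht := tb_eq hg hb
  subst ht
  simp only [lift]
  rw [dif_pos hk]

end Stmt9Aux

/-- For every `ℵ₁`-dense `B ⊆ ℕ → Bool` there is an `ℵ₁`-dense `B' ⊆ ℕ → ℕ` such that the
parity map restricted to `B'` is a bijection onto `B`. -/
theorem stmt_9 (B : Set (ℕ → Bool)) (hB : Aleph1Dense B) :
    ∃ B' : Set (ℕ → ℕ), Aleph1Dense B' ∧ Set.BijOn parity B' B := by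
  classical
  open Stmt9Aux in
  -- the constrained pieces of B
  set Sset : List ℕ → Set (ℕ → Bool) := fun t => {b | b ∈ B ∧ Compat t b} with hSset
  have hScard : ∀ t, Cardinal.aleph 1 ≤ Cardinal.mk (Sset t) := by
    intro t
    set w : ℕ → Bool := fun k =>
      if h : k < t.length then decide (Odd (t.get ⟨k, h⟩)) else false with hw
    have hseteq : Sset t = B ∩ {y : ℕ → Bool | ∀ k < t.length, y k = w k} := by
      ext b
      constructor
      · rintro ⟨hbB, hc⟩
        refine ⟨hbB, fun k hk => ?_⟩
        rw [hc k hk, hw]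
        simp [dif_pos hk]
      · rintro ⟨hbB, hc⟩
        refine ⟨hbB, fun k hk => ?_⟩
        rw [hc k hk, hw]
        simp [dif_pos hk]
    have := hB {y : ℕ → Bool | ∀ k < t.length, y k = w k}
      (isOpen_cyl w t.length) ⟨w, fun k _ => rfl⟩
    rw [← hseteq] at this
    exact this.ge
  -- disjointify, reindexing by ℕ
  obtain ⟨f, hf1, hf2, hf3⟩ := exists_disjoint_family
    (fun n => Sset (Denumerable.ofNat (List ℕ) n))
    (fun n => hScard _)
  set g : List ℕ → Set (ℕ → Bool) := fun t => f (Encodable.encode t) with hgdef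
  have hgsub : ∀ t, g t ⊆ Sset t := by
    intro t
    have := hf1 (Encodable.encode t)
    rwa [Denumerable.ofNat_encode] at this
  have hgdisj : ∀ t t', t ≠ t' → Disjoint (g t) (g t') := fun t t' h =>
    hf2 _ _ (fun he => h (Encodable.encode_injective he))
  have hgcard : ∀ t, Cardinal.aleph 1 ≤ Cardinal.mk (g t) := fun t => hf3 _
  -- the section
  have hcompat : ∀ b, Compat (Stmt9Aux.tb g b) b := by
    intro b
    rcases tb_spec g b with h | h
    · rw [h]
      intro k hk
      exact absurd hk (Nat.not_lt_zero k)
    · exact (hgsub _ h).2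
  have hpar : ∀ b, parity (Stmt9Aux.lift g b) = b := fun b => parity_lift g b (hcompat b)
  have hinj : Function.Injective (Stmt9Aux.lift g) := fun a b h => by
    rw [← hpar a, ← hpar b, h]
  refine ⟨Stmt9Aux.lift g '' B, ?_, ?_, ?_, ?_⟩
  · -- ℵ₁-dense
    intro U hU hUne
    obtain ⟨x, hx⟩ := hUne
    obtain ⟨n, hcyl⟩ := cyl_subset_of_isOpen hU hx
    set t : List ℕ := List.ofFn (fun i : Fin n => x i) with ht
    have htlen : t.length = n := List.length_ofFn
    refine le_antisymm ?_ ?_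
    · -- upper bound
      have h1 : Cardinal.mk ((Stmt9Aux.lift g '' B) ∩ U : Set (ℕ → ℕ)) ≤
          Cardinal.mk (Stmt9Aux.lift g '' B : Set (ℕ → ℕ)) :=
        Cardinal.mk_le_mk_of_subset Set.inter_subset_left
      have h2 : Cardinal.mk (Stmt9Aux.lift g '' B : Set (ℕ → ℕ)) ≤ Cardinal.mk B :=
        Cardinal.mk_image_le
      have h3 : Cardinal.mk B = Cardinal.aleph 1 := by
        have := hB Set.univ isOpen_univ ⟨fun _ => false, trivial⟩
        rwa [Set.inter_univ] at this
      exact (h1.trans h2).trans_eq h3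
    · -- lower bound
      have hmem : ∀ b ∈ g t, Stmt9Aux.lift g b ∈ (Stmt9Aux.lift g '' B) ∩ U := by
        intro b hb
        refine ⟨⟨b, (hgsub t hb).1, rfl⟩, hcyl ?_⟩
        intro k hk
        have hk' : k < t.length := htlen ▸ hk
        rw [lift_eq_of_mem hgdisj hb k hk']
        simp [ht, List.get_ofFn]
      have : Cardinal.mk (g t) ≤
          Cardinal.mk ((Stmt9Aux.lift g '' B) ∩ U : Set (ℕ → ℕ)) := by
        refine Cardinal.mk_le_of_injective
          (f := fun b : g t => (⟨Stmt9Aux.lift g b.1, hmem b.1 b.2⟩ :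
            ((Stmt9Aux.lift g '' B) ∩ U : Set (ℕ → ℕ)))) ?_
        intro a b h
        exact Subtype.ext (hinj (congrArg Subtype.val h))
      exact (hgcard t).trans this
  · -- maps to
    rintro x ⟨b, hb, rfl⟩
    rw [hpar b]
    exact hb
  · -- inj on
    rintro x ⟨a, _, rfl⟩ y ⟨b, _, rfl⟩ hxy
    rw [hpar a, hpar b] at hxy
    rw [hxy]
  · -- surj on
    intro b hb
    exact ⟨Stmt9Aux.lift g b, ⟨b, hb, rfl⟩, hpar b⟩
end

section
/- Assume 2^ℵ0 < ℵ_{ω₁} (the aleph indexed by the ordinal ω₁) and assume BA_Lip(2^ω). Then 2^ℵ0 = 2^ℵ1. -/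
/-!
For `g : ω₁ → Bool` let `B g` consist of points of Cantor space coding the nodes `g ↾ w`
(`w < ω₁`) of the tree `2^{<ω₁}`, the node at level `w` being placed inside a basic open set
attached to `w` so that every basic open set is attached to `ℵ₁` levels. Then every `B g` is
`ℵ₁`-dense, and `B g ∩ B g'` is countable for `g ≠ g'`, because two distinct branches share only
the nodes below their splitting level. A Lipschitz map is determined by countably many bits, so
there are at most `2^ℵ₀` of them. Fixing an `ℵ₁`-dense `A`, if `2^ℵ₀ < 2^ℵ₁` then one Lipschitz
map `f` serves two sets `B g ≠ B g'`, and maps `A` injectively into the countable `B g ∩ B g'`.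
-/

open Cardinal Set

namespace CantorSpace

def prepend (l : List Bool) (x : ℕ → Bool) : ℕ → Bool :=
  fun i => if h : i < l.length then l[i] else x (i - l.length)

lemma prepend_apply_of_lt {l : List Bool} {i : ℕ} (h : i < l.length) (x : ℕ → Bool) :
    prepend l x i = l[i] :=
  dif_pos h

lemma prepend_apply_length_add (l : List Bool) (x : ℕ → Bool) (j : ℕ) :
    prepend l x (l.length + j) = x j := by
  simp [prepend]

lemma prepend_map_range_apply {n i : ℕ} (h : i < n) (x z : ℕ → Bool) :
    prepend ((List.range n).map x) z i = x i := by
  simp [prepend, h]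

lemma _root_.IsLip.apply_eq_apply_prepend {f : (ℕ → Bool) → ℕ → Bool} (hf : IsLip f)
    (x : ℕ → Bool) (n : ℕ) : f x n = f (prepend ((List.range (n + 1)).map x) fun _ => false) n :=
  hf _ _ (n + 1) (fun _ hi => (prepend_map_range_apply hi _ _).symm) n n.lt_succ_self

lemma mk_isLip_le : #{f : (ℕ → Bool) → ℕ → Bool // IsLip f} ≤ 2 ^ ℵ₀ := by
  let code (f : {f : (ℕ → Bool) → ℕ → Bool // IsLip f}) (p : ℕ × List Bool) : Bool :=
    f.1 (prepend p.2 fun _ => false) p.1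
  have hcode : Function.Injective code := by
    rintro ⟨f, hf⟩ ⟨g, hg⟩ h
    ext x n
    show f x n = g x n
    rw [hf.apply_eq_apply_prepend, hg.apply_eq_apply_prepend]
    exact congrFun h (n, _)
  calc _ ≤ #(ℕ × List Bool → Bool) := mk_le_of_injective hcode
    _ = 2 ^ #(ℕ × List Bool) := by simp
    _ ≤ 2 ^ ℵ₀ := power_le_power_left two_ne_zero mk_le_aleph0

/-- `frame x = false, false, true, x 0, true, x 1, …`. Past the leading `false, false` it never
has two consecutive `false`s, which lets `tag (l, x)` determine the length of `l`. -/
def frame (x : ℕ → Bool) : ℕ → Bool :=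
  fun i => if i < 2 then false else if Even i then true else x (i / 2 - 1)

lemma frame_apply_odd (x : ℕ → Bool) (k : ℕ) : frame x (2 * k + 3) = x k := by
  have hodd : ¬ Even (2 * k + 3) := Nat.not_even_iff_odd.2 ⟨k + 1, by ring⟩
  rw [frame, if_neg (by omega), if_neg hodd]
  congr
  omega

@[simp] lemma frame_zero (x : ℕ → Bool) : frame x 0 = false := rfl

@[simp] lemma frame_one (x : ℕ → Bool) : frame x 1 = false := rfl

lemma frame_eq_true_or {i : ℕ} (hi : 1 ≤ i) (x : ℕ → Bool) :
    frame x i = true ∨ frame x (i + 1) = true := by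
  rcases Nat.even_or_odd i with h | h
  · have : ¬ i < 2 := by obtain ⟨k, rfl⟩ := h; omega
    left; simp [frame, h, this]
  · right; simp [frame, h.add_one]; omega

def tag (p : List Bool × (ℕ → Bool)) : ℕ → Bool :=
  prepend p.1 (frame p.2)

lemma length_le_of_tag_eq {p q : List Bool × (ℕ → Bool)} (h : tag p = tag q) :
    q.1.length ≤ p.1.length := by
  by_contra! hlt
  obtain ⟨d, hd⟩ := Nat.exists_eq_add_of_lt hlt
  have hshift (j : ℕ) : frame p.2 (d + 1 + j) = frame q.2 j := by
    have := congrFun h (q.1.length + j)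
    rwa [tag, tag, prepend_apply_length_add, hd,
      show p.1.length + d + 1 + j = p.1.length + (d + 1 + j) by omega,
      prepend_apply_length_add] at this
  rcases frame_eq_true_or (Nat.le_add_left 1 d) p.2 with h' | h'
  · simpa [h'] using hshift 0
  · simpa [h', add_assoc] using hshift 1

lemma tag_injective : Function.Injective tag := by
  rintro ⟨l, x⟩ ⟨l', x'⟩ h
  have hlen : l.length = l'.length :=
    le_antisymm (length_le_of_tag_eq h.symm) (length_le_of_tag_eq h)
  have hl : l = l' := List.ext_getElem hlen fun i hi hi' => by
    simpa [tag, prepend_apply_of_lt hi, prepend_apply_of_lt hi'] using congrFun h i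
  subst hl
  have hx : x = x' := funext fun k => by
    simpa [tag, prepend_apply_length_add, frame_apply_odd] using
      congrFun h (l.length + (2 * k + 3))
  rw [hx]

lemma exists_prepend_mem {U : Set (ℕ → Bool)} (hU : IsOpen U) (hne : U.Nonempty) :
    ∃ l : List Bool, ∀ z, prepend l z ∈ U := by
  obtain ⟨x, hx⟩ := hne
  obtain ⟨_, ⟨x', n, rfl⟩, -, hsub⟩ :=
    (PiNat.isTopologicalBasis_cylinders fun _ => Bool).exists_subset_of_mem_open hx hU
  exact ⟨(List.range n).map x', fun z => hsub fun i hi => prepend_map_range_apply hi _ _⟩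

lemma _root_.Aleph1Dense.mk_eq {Z : Type*} [TopologicalSpace Z] [Nonempty Z] {S : Set Z}
    (hS : Aleph1Dense S) : #S = ℵ₁ := by
  simpa using hS univ isOpen_univ univ_nonempty

abbrev Omega1 : Type := (ℵ₁ : Cardinal.{0}).ord.ToType

lemma mk_omega1 : #Omega1 = ℵ₁ :=
  mk_ord_toType _

lemma countable_Iio_omega1 (w : Omega1) : (Iio w).Countable := by
  rw [← le_aleph0_iff_set_countable, ← lt_aleph_one_iff]
  simpa using mk_Iio_lt w

/-- A node of the tree `2^{<ω₁}`: a level `w` and a binary sequence of length `w`. -/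
abbrev TreeNode : Type := Σ w : Omega1, (Iio w → Bool)

lemma mk_treeNode_le : #TreeNode ≤ 2 ^ ℵ₀ := by
  rw [mk_sigma]
  calc (sum fun w : Omega1 => #(Iio w → Bool))
      ≤ sum fun _ : Omega1 => (2 : Cardinal) ^ ℵ₀ := sum_le_sum _ _ fun w => by
        simpa using power_le_power_left two_ne_zero
          (le_aleph0_iff_set_countable.2 (countable_Iio_omega1 w))
    _ = 2 ^ ℵ₀ := by
      rw [sum_const', mk_omega1, two_power_aleph0]
      exact Cardinal.mul_eq_right aleph0_le_continuum aleph_one_le_continuum (aleph_pos 1).ne'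

noncomputable def treeNodeEmbedding : TreeNode ↪ (ℕ → Bool) :=
  Classical.choice <| (le_def _ _).1 <| mk_treeNode_le.trans_eq (by simp)

noncomputable def labelEquiv : Omega1 ≃ List Bool × Omega1 :=
  Classical.choice <| Cardinal.eq.1 <| by
    rw [mk_prod, lift_id, lift_id, mk_omega1, mk_list_eq_aleph0]
    exact (Cardinal.mul_eq_right aleph0_lt_aleph_one.le aleph0_lt_aleph_one.le aleph0_ne_zero).symm

/-- The node `g ↾ w`, placed in the basic open set `{prepend l z | z}` where
`l = (labelEquiv w).1`; every `l` is the label of `ℵ₁` levels `w`. -/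
noncomputable def branchPoint (g : Omega1 → Bool) (w : Omega1) : ℕ → Bool :=
  tag ((labelEquiv w).1, treeNodeEmbedding ⟨w, fun v => g v⟩)

lemma eq_and_eqOn_of_branchPoint_eq {g g' : Omega1 → Bool} {w w' : Omega1}
    (h : branchPoint g w = branchPoint g' w') : w = w' ∧ ∀ v < w, g v = g' v := by
  have hnode := treeNodeEmbedding.injective (Prod.ext_iff.1 (tag_injective h)).2
  obtain ⟨rfl, hfun⟩ := Sigma.mk.inj_iff.1 hnode
  exact ⟨rfl, fun v hv => congrFun (eq_of_heq hfun) ⟨v, hv⟩⟩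

lemma aleph1Dense_range_branchPoint (g : Omega1 → Bool) :
    Aleph1Dense (range (branchPoint g)) := by
  intro U hU hne
  obtain ⟨l, hl⟩ := exists_prepend_mem hU hne
  refine le_antisymm ?_ ?_
  · calc #(range (branchPoint g) ∩ U : Set _) ≤ #(range (branchPoint g)) :=
          mk_le_mk_of_subset inter_subset_left
      _ ≤ ℵ₁ := mk_range_le.trans_eq mk_omega1
  · let pt (v : Omega1) : (range (branchPoint g) ∩ U : Set _) :=
      ⟨branchPoint g (labelEquiv.symm (l, v)), mem_range_self _, by
        simpa [branchPoint, tag] using hl _⟩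
    have hpt : Function.Injective pt := fun v v' h => by
      simpa using (eq_and_eqOn_of_branchPoint_eq (congrArg Subtype.val h)).1
    exact mk_omega1.symm.le.trans (mk_le_of_injective hpt)

lemma mk_range_branchPoint_inter_le {g g' : Omega1 → Bool} (hne : g ≠ g') :
    #(range (branchPoint g) ∩ range (branchPoint g') : Set _) ≤ ℵ₀ := by
  obtain ⟨w₀, hw₀⟩ := Function.ne_iff.1 hne
  have hsub : range (branchPoint g) ∩ range (branchPoint g') ⊆ branchPoint g '' Iic w₀ := by
    rintro _ ⟨⟨w, rfl⟩, ⟨w', hw'⟩⟩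
    obtain ⟨-, hagree⟩ := eq_and_eqOn_of_branchPoint_eq hw'.symm
    exact ⟨w, not_lt.1 fun hlt => hw₀ (hagree w₀ hlt), rfl⟩
  rw [le_aleph0_iff_set_countable, ← Iio_insert] at *
  exact (((countable_Iio_omega1 w₀).insert w₀).image _).mono hsub

theorem mk_le_two_power_aleph0_of_pairwise_countable_inter {ι : Type} {A : Set (ℕ → Bool)}
    (hA : Aleph1Dense A) (B : ι → Set (ℕ → Bool)) (hB : ∀ i, Aleph1Dense (B i))
    (hBB : Pairwise fun i j => #(B i ∩ B j : Set _) ≤ ℵ₀)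
    (hBA : ∀ A B : Set (ℕ → Bool), Aleph1Dense A → Aleph1Dense B →
      ∃ f : (ℕ → Bool) → (ℕ → Bool), IsLip f ∧ Set.InjOn f A ∧ f '' A ⊆ B) :
    #ι ≤ 2 ^ ℵ₀ := by
  choose F hLip hInj hMaps using fun i => hBA A (B i) hA (hB i)
  suffices hF : Function.Injective fun i => (⟨F i, hLip i⟩ : {f // IsLip f}) from
    (mk_le_of_injective hF).trans mk_isLip_le
  intro i j hij
  by_contra hne
  have hFij : F i = F j := congrArg Subtype.val hij
  have himage : F i '' A ⊆ B i ∩ B j := subset_inter (hMaps i) (hFij ▸ hMaps j)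
  have : ℵ₁ ≤ ℵ₀ := calc
    ℵ₁ = #(F i '' A) := by rw [mk_image_eq_of_injOn _ _ (hInj i), hA.mk_eq]
    _ ≤ #(B i ∩ B j : Set _) := mk_le_mk_of_subset himage
    _ ≤ ℵ₀ := hBB hne
  exact aleph0_lt_aleph_one.not_ge this

end CantorSpace

open CantorSpace

theorem stmt_12_general
    (hBA : ∀ A B : Set (ℕ → Bool), Aleph1Dense A → Aleph1Dense B →
      ∃ f : (ℕ → Bool) → (ℕ → Bool), IsLip f ∧ Set.InjOn f A ∧ f '' A ⊆ B) :
    (2 : Cardinal) ^ Cardinal.aleph0 = (2 : Cardinal) ^ Cardinal.aleph 1 := by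
  have hle : (2 : Cardinal.{0}) ^ ℵ₁ ≤ 2 ^ ℵ₀ := by
    simpa [mk_omega1] using mk_le_two_power_aleph0_of_pairwise_countable_inter
      (aleph1Dense_range_branchPoint fun _ => false) _ aleph1Dense_range_branchPoint
      (fun _ _ hne => mk_range_branchPoint_inter_le hne) hBA
  have heq := le_antisymm (power_le_power_left two_ne_zero aleph0_lt_aleph_one.le) hle
  simpa using congrArg Cardinal.lift heq

/-- If `2^ℵ₀ < ℵ_{ω₁}` then `BA_Lip(2^ω)` implies `2^ℵ₀ = 2^ℵ₁`. -/
theorem stmt_12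
    (hsmall : 2 ^ Cardinal.aleph0 < Cardinal.aleph (Ordinal.omega 1))
    (hBA : ∀ A B : Set (ℕ → Bool), Aleph1Dense A → Aleph1Dense B →
      ∃ f : (ℕ → Bool) → (ℕ → Bool), IsLip f ∧ Set.InjOn f A ∧ f '' A ⊆ B) :
    (2 : Cardinal) ^ Cardinal.aleph0 = (2 : Cardinal) ^ Cardinal.aleph 1 :=
  stmt_12_general hBA
end

section
/- B̄A_Lip(ω^ω) implies add(𝒩) > ℵ1: if for all ℵ1-dense A, B ⊆ ℕ → ℕ there is a Lipschitz f : (ℕ → ℕ) → (ℕ → ℕ) injective on A with f '' A = B, then for every family 𝒜 of Lebesgue-measure-zero subsets of ℝ with cardinality of 𝒜 at most ℵ1, the union ⋃ 𝒜 has Lebesgue measure zero. -/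
open Cardinal Set MeasureTheory ENNReal Filter

namespace BALip


/-- append a finite list before a function -/
def app (u : List ℕ) (g : ℕ → ℕ) : ℕ → ℕ := fun i =>
  if i < u.length then u.getD i 0 else g (i - u.length)

lemma app_nil (g : ℕ → ℕ) : app [] g = g := by
  funext i; simp [app]

lemma app_injective (u : List ℕ) : Function.Injective (app u) := by
  intro g g' h
  funext i
  have := congrFun h (u.length + i)
  simpa [app] using this

/-- the basic cone on a finite sequence -/
def cone (u : List ℕ) : Set (ℕ → ℕ) := {x | ∀ i < u.length, x i = u.getD i 0}

lemma app_mem_cone (u : List ℕ) (g : ℕ → ℕ) : app u g ∈ cone u := by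
  intro i hi; simp [app, hi]

lemma isOpen_cone (u : List ℕ) : IsOpen (cone u) := by
  have : cone u = ⋂ i ∈ Finset.range u.length, (fun x : ℕ → ℕ => x i) ⁻¹' {u.getD i 0} := by
    ext x
    simp [cone, Set.mem_iInter]
  rw [this]
  exact isOpen_biInter_finset fun i _ =>
    (continuous_apply i).isOpen_preimage _ (isOpen_discrete _)

lemma exists_cone_subset {U : Set (ℕ → ℕ)} (hU : IsOpen U) {x : ℕ → ℕ} (hx : x ∈ U) :
    ∃ u : List ℕ, x ∈ cone u ∧ cone u ⊆ U := by
  obtain ⟨I, w, hIw, hsub⟩ := isOpen_pi_iff.1 hU x hx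
  classical
  set M := (I.sup id) + 1 with hM
  refine ⟨List.ofFn (fun i : Fin M => x i), ?_, ?_⟩
  · intro i hi
    simp only [List.length_ofFn] at hi
    rw [List.getD_eq_getElem _ _ (by simpa only [List.length_ofFn] using hi), List.getElem_ofFn]
  · intro y hy
    apply hsub
    intro a ha
    have haM : a < M := Nat.lt_succ_of_le (Finset.le_sup (f := id) ha)
    have : y a = x a := by
      have := hy a (by simpa only [List.length_ofFn] using haM)
      rwa [List.getD_eq_getElem _ _ (by simpa only [List.length_ofFn] using haM), List.getElem_ofFn] at this
    rw [this]
    exact (hIw a ha).2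

/-- a set of 0-1 valued functions of size ℵ₁ -/
lemma exists_R01 : ∃ R : Set (ℕ → ℕ), Cardinal.mk ↥R = Cardinal.aleph 1 ∧
    ∀ b ∈ R, ∀ i, b i ≤ 1 := by
  classical
  have h1 : Cardinal.aleph 1 ≤ Cardinal.mk (Set ℕ) := by
    rw [Cardinal.mk_set, Cardinal.mk_nat]
    exact Cardinal.aleph_one_le_continuum
  rw [← Cardinal.mk_out (Cardinal.aleph 1)] at h1
  obtain ⟨e⟩ := Cardinal.le_def _ _ |>.1 h1
  set F : (Cardinal.aleph 1).out → (ℕ → ℕ) := fun o i => if i ∈ e o then 1 else 0 with hF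
  have hFinj : Function.Injective F := by
    intro o o' h
    apply e.injective
    ext i
    have hoi := congrFun h i
    simp only [hF] at hoi
    constructor
    · intro h1
      by_contra h2
      rw [if_pos h1, if_neg h2] at hoi; exact one_ne_zero hoi
    · intro h2
      by_contra h1
      rw [if_neg h1, if_pos h2] at hoi; exact zero_ne_one hoi
  refine ⟨Set.range F, ?_, ?_⟩
  · rw [Cardinal.mk_range_eq _ hFinj, Cardinal.mk_out]
  · rintro b ⟨o, rfl⟩ i
    by_cases h : i ∈ e o <;> simp [hF, h]

lemma aleph0_le_aleph1 : (ℵ₀ : Cardinal) ≤ Cardinal.aleph 1 := by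
  simpa using Cardinal.aleph_le_aleph.2 (zero_le_one)

/-- the spread-out family is ℵ₁-dense -/
lemma dense_spread (T : Set (ℕ → ℕ)) (hT : Cardinal.mk ↥T = Cardinal.aleph 1) :
    Aleph1Dense (⋃ u : List ℕ, app u '' T) := by
  intro U hU hne
  apply le_antisymm
  · calc Cardinal.mk ↥((⋃ u : List ℕ, app u '' T) ∩ U)
        ≤ Cardinal.mk ↥(⋃ u : List ℕ, app u '' T) :=
          Cardinal.mk_le_mk_of_subset Set.inter_subset_left
      _ ≤ Cardinal.mk (List ℕ) * ⨆ u : List ℕ, Cardinal.mk ↥(app u '' T) :=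
          Cardinal.mk_iUnion_le _
      _ ≤ ℵ₀ * Cardinal.aleph 1 := by
          apply mul_le_mul'
          · exact le_of_eq (Cardinal.mk_list_eq_aleph0 _)
          · exact ciSup_le fun u => (Cardinal.mk_image_le).trans (le_of_eq hT)
      _ = Cardinal.aleph 1 := by
          rw [Cardinal.mul_eq_max le_rfl aleph0_le_aleph1]
          exact max_eq_right aleph0_le_aleph1
  · obtain ⟨x, hx⟩ := hne
    obtain ⟨u, _, hcone⟩ := exists_cone_subset hU hx
    have : Cardinal.mk ↥T ≤ Cardinal.mk ↥((⋃ u : List ℕ, app u '' T) ∩ U) := by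
      refine Cardinal.mk_le_of_injective (f := fun g : ↥T =>
        (⟨app u g, ⟨Set.mem_iUnion.2 ⟨u, Set.mem_image_of_mem _ g.2⟩,
          hcone (app_mem_cone u g)⟩⟩ : ↥((⋃ u : List ℕ, app u '' T) ∩ U))) ?_
      intro g g' h
      have := app_injective u (congrArg Subtype.val h)
      exact Subtype.ext this
    rwa [hT] at this

/-- Part I : the slalom lemma -/
theorem exists_slalom
    (hBA : ∀ A B : Set (ℕ → ℕ), Aleph1Dense A → Aleph1Dense B →
      ∃ f : (ℕ → ℕ) → (ℕ → ℕ), IsLip f ∧ Set.InjOn f A ∧ f '' A = B)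
    (S : Set (ℕ → ℕ)) (hS : Cardinal.mk ↥S ≤ Cardinal.aleph 1) :
    ∃ C : List ℕ → ℕ → Finset ℕ, (∀ u n, (C u n).card ≤ 2 ^ (n + 1)) ∧
      ∀ g ∈ S, ∃ u, ∀ n, g n ∈ C u n := by
  classical
  obtain ⟨R, hRcard, hR01⟩ := exists_R01
  set S' : Set (ℕ → ℕ) := S ∪ R with hS'
  have hS'card : Cardinal.mk ↥S' = Cardinal.aleph 1 := by
    apply le_antisymm
    · calc Cardinal.mk ↥S' ≤ Cardinal.mk ↥S + Cardinal.mk ↥R := Cardinal.mk_union_le _ _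
        _ ≤ Cardinal.aleph 1 + Cardinal.aleph 1 := by
            exact add_le_add hS (le_of_eq hRcard)
        _ = Cardinal.aleph 1 := Cardinal.add_eq_self aleph0_le_aleph1
    · rw [← hRcard]
      exact Cardinal.mk_le_mk_of_subset Set.subset_union_right
  set Aset := ⋃ u : List ℕ, app u '' S' with hAset
  set Bset := ⋃ u : List ℕ, app u '' R with hBset
  obtain ⟨f, hLip, _, hImg⟩ := hBA Bset Aset (dense_spread R hRcard) (dense_spread S' hS'card)
  -- the key finite sets
  set Y : List ℕ → ℕ → (ℕ → ℕ) → (ℕ → ℕ) := fun u n v i =>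
    if i < u.length then u.getD i 0 else if i ≤ n then min (v i) 1 else 0 with hY
  set C : List ℕ → ℕ → Finset ℕ := fun u n =>
    (Finset.univ : Finset (Fin (n + 1) → Fin 2)).image
      (fun v => f (Y u n (fun i => if h : i < n + 1 then (v ⟨i, h⟩ : ℕ) else 0)) n) with hC
  refine ⟨C, ?_, ?_⟩
  · intro u n
    calc (C u n).card ≤ (Finset.univ : Finset (Fin (n + 1) → Fin 2)).card :=
        Finset.card_image_le
      _ = 2 ^ (n + 1) := by simp [Fintype.card_fun]
  · intro g hg
    have hgA : g ∈ Aset := by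
      rw [hAset]
      exact Set.mem_iUnion.2 ⟨[], ⟨g, Set.mem_union_left _ hg, app_nil g⟩⟩
    rw [← hImg] at hgA
    obtain ⟨x, hxB, hfx⟩ := hgA
    obtain ⟨u, b, hbR, hab⟩ := Set.mem_iUnion.1 hxB
    refine ⟨u, fun n => ?_⟩
    rw [hC]
    simp only [Finset.mem_image, Finset.mem_univ, true_and]
    refine ⟨fun i => ⟨min (x i) 1, by omega⟩, ?_⟩
    have hagree : ∀ i < n + 1,
        (Y u n (fun i => if h : i < n + 1 then
          (((fun i : Fin (n+1) => (⟨min (x i) 1, by omega⟩ : Fin 2)) ⟨i, h⟩ : Fin 2) : ℕ)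
          else 0)) i = x i := by
      intro i hi
      by_cases hiu : i < u.length
      · have : x i = u.getD i 0 := by
          rw [← hab]; simp [app, hiu]
        simp [hY, hiu, this]
      · have hxi : x i ≤ 1 := by
          rw [← hab]
          simp only [app, hiu, if_false]
          exact hR01 b hbR _
        have : min (x i) 1 = x i := min_eq_left hxi
        simp only [hY, hiu, if_false, if_pos (Nat.lt_succ_iff.1 hi), dif_pos hi]
        simpa [this]
    have := hLip _ x (n + 1) hagree n (Nat.lt_succ_self n)
    rw [this, hfx]


noncomputable def bse : ℝ≥0∞ := ENNReal.ofReal (1/16)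

noncomputable def del (n : ℕ) : ℝ≥0∞ := bse ^ n

def qlen (F : Finset (ℕ × ℚ × ℚ)) : ℚ := ∑ x ∈ F, max (x.2.2 - x.2.1) 0

def JJ (F : Finset (ℕ × ℚ × ℚ)) : Set ℝ := ⋃ x ∈ F, Set.Ioo (x.2.1 : ℝ) (x.2.2 : ℝ)

noncomputable def E (n k : ℕ) : Set ℝ :=
  (Encodable.decode (α := Finset (ℕ × ℚ × ℚ)) k).elim ∅
    (fun F => if qlen F ≤ (1/16 : ℚ) ^ n then JJ F else ∅)

lemma ofReal_max (a : ℝ) : ENNReal.ofReal (max a 0) = ENNReal.ofReal a := by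
  rcases le_total a 0 with h | h
  · rw [max_eq_right h, ENNReal.ofReal_zero, eq_comm, ENNReal.ofReal_eq_zero]
    exact h
  · rw [max_eq_left h]

lemma JJ_vol (F : Finset (ℕ × ℚ × ℚ)) :
    volume (JJ F) ≤ ENNReal.ofReal ((qlen F : ℚ) : ℝ) := by
  calc volume (JJ F) ≤ ∑ x ∈ F, volume (Set.Ioo (x.2.1 : ℝ) (x.2.2 : ℝ)) :=
      measure_biUnion_finset_le F _
    _ ≤ ∑ x ∈ F, ENNReal.ofReal (max ((x.2.2 : ℝ) - (x.2.1 : ℝ)) 0) := by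
      refine Finset.sum_le_sum fun x _ => ?_
      rw [Real.volume_Ioo, ofReal_max]
    _ = ENNReal.ofReal (∑ x ∈ F, max ((x.2.2 : ℝ) - (x.2.1 : ℝ)) 0) := by
      rw [ENNReal.ofReal_sum_of_nonneg]
      intro i _; exact le_max_right _ _
    _ = ENNReal.ofReal ((qlen F : ℚ) : ℝ) := by
      congr 1
      rw [qlen]
      push_cast
      rfl

lemma E_vol (n k : ℕ) : volume (E n k) ≤ del n := by
  rw [E]
  rcases hd : Encodable.decode (α := Finset (ℕ × ℚ × ℚ)) k with _ | F
  · simp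
  · rw [Option.elim_some]
    split_ifs with h
    · calc volume (JJ F) ≤ ENNReal.ofReal ((qlen F : ℚ) : ℝ) := JJ_vol F
        _ ≤ ENNReal.ofReal (((1/16 : ℚ) ^ n : ℚ) : ℝ) := by
          apply ENNReal.ofReal_le_ofReal
          exact_mod_cast h
        _ = del n := by
          rw [del, bse]
          push_cast
          rw [ENNReal.ofReal_pow (by norm_num)]
    · simp

lemma E_encode (n : ℕ) (F : Finset (ℕ × ℚ × ℚ)) (h : qlen F ≤ (1/16 : ℚ) ^ n) :
    E n (Encodable.encode F) = JJ F := by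
  rw [E, Encodable.encodek, Option.elim_some, if_pos h]

lemma eps_arith (ε : ℝ≥0∞) : ε/2 + ε/4 + ε/4 = ε := by
  have h : ε / 2 / 2 = ε / 4 := by
    have h2 : ((2:ℝ≥0∞) * 2)⁻¹ = 2⁻¹ * 2⁻¹ :=
      ENNReal.mul_inv (Or.inl (by norm_num)) (Or.inl (by norm_num))
    simp only [div_eq_mul_inv, mul_assoc, ← h2]
    norm_num
  rw [add_assoc, ← h, ENNReal.add_halves, ENNReal.add_halves]

lemma div4_le (a : ℝ≥0∞) : a / 4 ≤ a := by
  rw [div_eq_mul_inv]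
  calc a * 4⁻¹ ≤ a * 1 := mul_le_mul_right (ENNReal.inv_le_one.2 (by norm_num)) a
    _ = a := mul_one a

lemma null_cover {N : Set ℝ} (hN : volume N = 0) {ε : ℝ≥0∞} (hε0 : ε ≠ 0) (hεt : ε ≠ ⊤) :
    ∃ I : ℕ → ℚ × ℚ, (N ⊆ ⋃ i, Set.Ioo (((I i).1 : ℝ)) (((I i).2 : ℝ))) ∧
      ∑' i, ENNReal.ofReal (((I i).2 : ℝ) - ((I i).1 : ℝ)) ≤ ε := by
  classical
  have houter : StieltjesFunction.id.outer N = 0 := by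
    have h1 : StieltjesFunction.id.measure N = StieltjesFunction.id.outer N := by
      rw [StieltjesFunction.measure_def]; rfl
    rw [← h1, ← Real.volume_val]; exact hN
  have hq : (⨅ (t : ℕ → Set ℝ) (_ : N ⊆ ⋃ n, t n),
      ∑' n, StieltjesFunction.id.length (t n)) = 0 := houter
  have hhalf : (0:ℝ≥0∞) < ε/2 := ENNReal.div_pos hε0 (by norm_num)
  obtain ⟨t, ht⟩ := iInf_lt_iff.1 (show (⨅ (t : ℕ → Set ℝ) (_ : N ⊆ ⋃ n, t n),
      ∑' n, StieltjesFunction.id.length (t n)) < ε/2 by rw [hq]; exact hhalf)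
  obtain ⟨hsub, hlen⟩ := iInf_lt_iff.1 ht
  have hq4 : (ε/4 : ℝ≥0∞) ≠ 0 := (ENNReal.div_pos hε0 (by norm_num)).ne'
  obtain ⟨δ1, hδ1, hδ1s⟩ := ENNReal.exists_pos_sum_of_countable hq4 ℕ
  obtain ⟨δ2, hδ2, hδ2s⟩ := ENNReal.exists_pos_sum_of_countable hq4 ℕ
  have H : ∀ n, ∃ pq : ℚ × ℚ, (t n ⊆ Set.Ioo ((pq.1 : ℝ)) ((pq.2 : ℝ))) ∧
      ENNReal.ofReal ((pq.2 : ℝ) - (pq.1 : ℝ)) ≤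
        StieltjesFunction.id.length (t n) + δ1 n + δ2 n := by
    intro n
    have hfin : StieltjesFunction.id.length (t n) ≠ ⊤ := by
      have h1 : StieltjesFunction.id.length (t n) ≤
          ∑' i, StieltjesFunction.id.length (t i) :=
        ENNReal.le_tsum (f := fun i => StieltjesFunction.id.length (t i)) n
      exact (h1.trans_lt (hlen.trans (ENNReal.div_lt_top hεt (by norm_num)))).ne
    have hlt : (⨅ (a : ℝ) (b : ℝ) (_ : t n ⊆ Set.Ioc a b), ENNReal.ofReal (b - a)) <
        StieltjesFunction.id.length (t n) + δ1 n := by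
      have : StieltjesFunction.id.length (t n) <
          StieltjesFunction.id.length (t n) + δ1 n :=
        lt_add_right hfin (by exact_mod_cast (hδ1 n).ne')
      have hbot : (botSet : Set ℝ) = ∅ := by
        ext x
        simp only [Set.mem_empty_iff_false, iff_false]
        intro hx
        have := (show IsBot x from hx) (x - 1)
        linarith
      refine lt_of_le_of_lt (le_of_eq ?_) this
      rw [StieltjesFunction.length_eq, hbot, Set.diff_empty]
      rfl
    obtain ⟨a, ha⟩ := iInf_lt_iff.1 hlt
    obtain ⟨b, hb⟩ := iInf_lt_iff.1 ha
    obtain ⟨hsub', hab⟩ := iInf_lt_iff.1 hb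
    set r : ℝ := (δ2 n : ℝ) with hr
    have hrpos : 0 < r := by exact_mod_cast hδ2 n
    obtain ⟨p, hp1, hp2⟩ := exists_rat_btwn (show a - r/2 < a by linarith)
    obtain ⟨q, hq1, hq2⟩ := exists_rat_btwn (show b < b + r/2 by linarith)
    refine ⟨(p, q), ?_, ?_⟩
    · intro x hx
      have := hsub' hx
      exact ⟨lt_of_lt_of_le hp2 (le_of_lt this.1), lt_of_le_of_lt this.2 hq1⟩
    · have h1 : ENNReal.ofReal ((q : ℝ) - (p : ℝ)) ≤ ENNReal.ofReal ((b - a) + r) :=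
        ENNReal.ofReal_le_ofReal (by linarith)
      have h2 : ENNReal.ofReal ((b - a) + r) ≤ ENNReal.ofReal (b - a) + ENNReal.ofReal r :=
        ENNReal.ofReal_add_le
      have h3 : ENNReal.ofReal r = (δ2 n : ℝ≥0∞) := by rw [hr, ENNReal.ofReal_coe_nnreal]
      refine h1.trans (h2.trans ?_)
      rw [h3]
      exact add_le_add hab.le le_rfl
  choose I hIsub hIlen using H
  refine ⟨I, ?_, ?_⟩
  · exact hsub.trans (Set.iUnion_mono fun n => hIsub n)
  · calc ∑' i, ENNReal.ofReal (((I i).2 : ℝ) - ((I i).1 : ℝ))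
        ≤ ∑' i, (StieltjesFunction.id.length (t i) + δ1 i + δ2 i) :=
          ENNReal.tsum_le_tsum hIlen
      _ = (∑' i, StieltjesFunction.id.length (t i)) + (∑' i, (δ1 i : ℝ≥0∞)) +
          (∑' i, (δ2 i : ℝ≥0∞)) := by
          rw [ENNReal.tsum_add, ENNReal.tsum_add]
      _ ≤ ε/2 + ε/4 + ε/4 := by
          exact add_le_add (add_le_add hlen.le hδ1s.le) hδ2s.le
      _ = ε := eps_arith ε

lemma exists_code {N : Set ℝ} (hN : volume N = 0) :
    ∃ g : ℕ → ℕ, ∀ m, N ⊆ ⋃ (n : ℕ) (_ : m ≤ n), E n (g n) := by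
  classical
  have hbse0 : (0:ℝ≥0∞) < bse := by rw [bse]; exact ENNReal.ofReal_pos.2 (by norm_num)
  have hbse1 : bse < 1 := by rw [bse]; exact ENNReal.ofReal_lt_one.2 (by norm_num)
  have hbset : bse ≠ ⊤ := by rw [bse]; exact ENNReal.ofReal_ne_top
  have hblock : ∀ m : ℕ, ∃ k : ℕ → ℕ, N ⊆ ⋃ j : ℕ, E (Nat.pair m j) (k j) := by
    intro m
    set b : ℕ → ℝ≥0∞ := fun j => del (Nat.pair m j) with hb
    have hb0 : ∀ j, b j ≠ 0 := fun j => pow_ne_zero _ hbse0.ne'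
    have hbt : ∀ j, b j ≠ ⊤ := fun j => ENNReal.pow_ne_top hbset
    have hb4 : ∀ j, (0:ℝ≥0∞) < b j / 4 := fun j => ENNReal.div_pos (hb0 j) (by norm_num)
    have hb4t : ∀ j, b j / 4 ≠ ⊤ := fun j => (ENNReal.div_lt_top (hbt j) (by norm_num)).ne
    obtain ⟨I, hIsub, hIlen⟩ := null_cover hN (ε := b 0 / 4) (hb4 0).ne' (hb4t 0)
    set l : ℕ → ℝ≥0∞ := fun i => ENNReal.ofReal (((I i).2 : ℝ) - ((I i).1 : ℝ)) with hl
    set L : ℕ → ℝ≥0∞ := fun v => ∑' i, l (v + i) with hL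
    have hL0 : L 0 ≤ b 0 / 4 := by
      rw [hL]
      simpa only [zero_add] using hIlen
    have htop : ∑' i, l i ≠ ⊤ := (hIlen.trans_lt (ENNReal.div_lt_top (hbt 0) (by norm_num))).ne
    have hLtend : Filter.Tendsto L Filter.atTop (nhds 0) := by
      have h2 := ENNReal.tendsto_sum_nat_add l htop
      have h3 : L = fun i => ∑' k, l (k + i) := by
        funext v
        exact tsum_congr fun k => by rw [add_comm]
      rw [h3]
      exact h2
    have hfind : ∀ j, ∃ v, L v ≤ b j / 4 := by
      intro j
      obtain ⟨v, hv⟩ := (hLtend.eventually (gt_mem_nhds (hb4 j))).exists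
      exact ⟨v, hv.le⟩
    set v : ℕ → ℕ := fun j => Nat.find (hfind j) with hveq
    have hvspec : ∀ j, L (v j) ≤ b j / 4 := fun j => Nat.find_spec (hfind j)
    have hbanti : ∀ j, b (j+1) ≤ b j := by
      intro j
      exact pow_le_pow_of_le_one zero_le hbse1.le
        (Nat.le_of_lt (Nat.pair_lt_pair_right m (Nat.lt_succ_self j)))
    have hvmono : Monotone v := by
      apply monotone_nat_of_le_succ
      intro j
      exact Nat.find_mono fun n hn => hn.trans (ENNReal.div_le_div_right (hbanti j) 4)
    have hv0 : v 0 = 0 := by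
      rw [hveq, Nat.find_eq_zero]
      exact hL0
    set F : ℕ → Finset (ℕ × ℚ × ℚ) :=
      fun j => (Finset.Ico (v j) (v (j+1))).image (fun i => (i, I i)) with hF
    have hpsum : ∀ j, ∑ i ∈ Finset.Ico (v j) (v (j+1)), l i ≤ L (v j) := by
      intro j
      rw [Finset.sum_Ico_eq_sum_range, hL]
      exact ENNReal.sum_le_tsum _
    have hgate : ∀ j, qlen (F j) ≤ (1/16 : ℚ) ^ (Nat.pair m j) := by
      intro j
      have hinj : ∀ x ∈ Finset.Ico (v j) (v (j+1)), ∀ y ∈ Finset.Ico (v j) (v (j+1)),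
          (fun i => (i, I i)) x = (fun i => (i, I i)) y → x = y :=
        fun x _ y _ h => congrArg Prod.fst h
      have hsum : qlen (F j) = ∑ i ∈ Finset.Ico (v j) (v (j+1)), max ((I i).2 - (I i).1) 0 := by
        rw [qlen, hF, Finset.sum_image hinj]
      have hEN : ENNReal.ofReal ((qlen (F j) : ℚ) : ℝ) ≤
          ENNReal.ofReal (((1/16:ℚ) ^ (Nat.pair m j) : ℚ) : ℝ) := by
        have e1 : ((qlen (F j) : ℚ) : ℝ) =
            ∑ i ∈ Finset.Ico (v j) (v (j+1)), max (((I i).2 : ℝ) - ((I i).1 : ℝ)) 0 := by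
          rw [hsum]
          push_cast
          rfl
        have e2 : ENNReal.ofReal ((qlen (F j) : ℚ) : ℝ) =
            ∑ i ∈ Finset.Ico (v j) (v (j+1)), l i := by
          rw [e1, ENNReal.ofReal_sum_of_nonneg (fun i _ => le_max_right _ _)]
          exact Finset.sum_congr rfl fun i _ => ofReal_max _
        rw [e2]
        have e3 : ((((1/16:ℚ) ^ (Nat.pair m j) : ℚ)) : ℝ) = (1/16 : ℝ) ^ (Nat.pair m j) := by
          push_cast; rfl
        rw [e3, ENNReal.ofReal_pow (by norm_num)]
        calc ∑ i ∈ Finset.Ico (v j) (v (j+1)), l i ≤ L (v j) := hpsum j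
          _ ≤ b j / 4 := hvspec j
          _ ≤ b j := div4_le _
          _ = ENNReal.ofReal (1/16) ^ (Nat.pair m j) := rfl
      have := (ENNReal.ofReal_le_ofReal_iff (by positivity)).1 hEN
      exact_mod_cast this
    refine ⟨fun j => Encodable.encode (F j), ?_⟩
    intro x hx
    obtain ⟨i, hi⟩ := Set.mem_iUnion.1 (hIsub hx)
    have hipos : (0:ℝ≥0∞) < l i := by
      rw [hl]
      refine ENNReal.ofReal_pos.2 ?_
      have h1 := hi.1
      have h2 := hi.2
      linarith
    have hex : ∃ j, i < v j := by
      have h1 : Filter.Tendsto b Filter.atTop (nhds 0) := by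
        have h2 : Filter.Tendsto (fun j : ℕ => bse ^ j) Filter.atTop (nhds 0) :=
          ENNReal.tendsto_pow_atTop_nhds_zero_of_lt_one hbse1
        have h3 : Filter.Tendsto (fun j : ℕ => Nat.pair m j) Filter.atTop Filter.atTop :=
          Filter.tendsto_atTop_mono (fun j => Nat.right_le_pair m j) Filter.tendsto_id
        exact h2.comp h3
      obtain ⟨j, hj⟩ := (h1.eventually (gt_mem_nhds hipos)).exists
      refine ⟨j, ?_⟩
      by_contra hcon
      push_neg at hcon
      have hle : l i ≤ L (v j) := by
        rw [hL]
        have h4 := ENNReal.le_tsum (f := fun t => l (v j + t)) (i - v j)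
        simpa [Nat.add_sub_cancel' hcon] using h4
      have : l i ≤ b j / 4 := hle.trans (hvspec j)
      exact absurd ((this.trans (div4_le _)).trans_lt hj) (lt_irrefl _)
    have hjm0 : Nat.find hex ≠ 0 := by
      intro h0
      have := Nat.find_spec hex
      rw [h0, hv0] at this
      omega
    obtain ⟨j, hjeq⟩ : ∃ j, Nat.find hex = j + 1 :=
      ⟨Nat.find hex - 1, (Nat.succ_pred_eq_of_pos (Nat.pos_of_ne_zero hjm0)).symm⟩
    have hji : v j ≤ i := by
      have := Nat.find_min hex (by omega : j < Nat.find hex)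
      omega
    have hij : i < v (j+1) := by
      have := Nat.find_spec hex
      rwa [hjeq] at this
    refine Set.mem_iUnion.2 ⟨j, ?_⟩
    rw [E_encode _ _ (hgate j)]
    have hmem : ((i, I i) : ℕ × ℚ × ℚ) ∈ (F j : Set (ℕ × ℚ × ℚ)) :=
      Finset.mem_coe.2 (Finset.mem_image.2 ⟨i, Finset.mem_Ico.2 ⟨hji, hij⟩, rfl⟩)
    exact Set.mem_biUnion hmem hi
  choose K hK using hblock
  refine ⟨fun n => K n.unpair.1 n.unpair.2, ?_⟩
  intro m x hx
  obtain ⟨j, hj⟩ := Set.mem_iUnion.1 (hK m hx)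
  refine Set.mem_iUnion.2 ⟨Nat.pair m j, Set.mem_iUnion.2 ⟨Nat.left_le_pair m j, ?_⟩⟩
  simpa [Nat.unpair_pair] using hj


end BALip

/-- `B̄A_Lip(ω^ω)` implies `add(𝒩) > ℵ₁`: any union of at most `ℵ₁` Lebesgue-null subsets
of `ℝ` is Lebesgue-null. -/
theorem stmt_14
    (hBA : ∀ A B : Set (ℕ → ℕ), Aleph1Dense A → Aleph1Dense B →
      ∃ f : (ℕ → ℕ) → (ℕ → ℕ), IsLip f ∧ Set.InjOn f A ∧ f '' A = B) :
    ∀ 𝒜 : Set (Set ℝ), (∀ s ∈ 𝒜, MeasureTheory.volume s = 0) →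
      Cardinal.mk ↥𝒜 ≤ Cardinal.aleph 1 →
      MeasureTheory.volume (⋃₀ 𝒜) = 0 := by
  intro 𝒜 hnull hcard
  classical
  choose G hG using fun N : ↥𝒜 => BALip.exists_code (hnull N.1 N.2)
  have hScard : Cardinal.mk ↥(Set.range G) ≤ Cardinal.aleph 1 :=
    Cardinal.mk_range_le.trans hcard
  obtain ⟨C, hCcard, hCmem⟩ := BALip.exists_slalom hBA (Set.range G) hScard
  set V : List ℕ → ℕ → Set ℝ :=
    fun u m => ⋃ k : ℕ, ⋃ t ∈ C u (m + k), BALip.E (m + k) t with hV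
  have hsub : ⋃₀ 𝒜 ⊆ ⋃ u : List ℕ, ⋂ m, V u m := by
    intro x hx
    obtain ⟨N0, hN0, hxN⟩ := hx
    obtain ⟨u, hu⟩ := hCmem (G ⟨N0, hN0⟩) ⟨⟨N0, hN0⟩, rfl⟩
    refine Set.mem_iUnion.2 ⟨u, Set.mem_iInter.2 fun m => ?_⟩
    have hmem := hG ⟨N0, hN0⟩ m hxN
    obtain ⟨n, hn⟩ := Set.mem_iUnion.1 hmem
    obtain ⟨hmn, hxE⟩ := Set.mem_iUnion.1 hn
    refine Set.mem_iUnion.2 ⟨n - m, ?_⟩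
    have hms : m + (n - m) = n := by omega
    rw [hms]
    exact Set.mem_biUnion (Finset.mem_coe.2 (hu n)) hxE
  have hnullV : ∀ u : List ℕ, MeasureTheory.volume (⋂ m, V u m) = 0 := by
    intro u
    set c : ℕ → ℝ≥0∞ := fun n => 2 ^ (n + 1) * BALip.del n with hc
    have hone : ∀ n, MeasureTheory.volume (⋃ t ∈ C u n, BALip.E n t) ≤ c n := by
      intro n
      calc MeasureTheory.volume (⋃ t ∈ C u n, BALip.E n t)
          ≤ ∑ t ∈ C u n, MeasureTheory.volume (BALip.E n t) :=
            MeasureTheory.measure_biUnion_finset_le _ _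
        _ ≤ (C u n).card • BALip.del n :=
            Finset.sum_le_card_nsmul _ _ _ fun t _ => BALip.E_vol n t
        _ ≤ (2 ^ (n + 1)) • BALip.del n :=
            nsmul_le_nsmul_left zero_le (hCcard u n)
        _ = c n := by
            rw [hc, nsmul_eq_mul]
            push_cast
            ring
    have hVle : ∀ m, MeasureTheory.volume (V u m) ≤ ∑' k, c (m + k) := by
      intro m
      calc MeasureTheory.volume (V u m)
          ≤ ∑' k, MeasureTheory.volume (⋃ t ∈ C u (m + k), BALip.E (m + k) t) :=
            MeasureTheory.measure_iUnion_le _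
        _ ≤ ∑' k, c (m + k) := ENNReal.tsum_le_tsum fun k => hone (m + k)
    have h2bse : (2 : ℝ≥0∞) * BALip.bse = ENNReal.ofReal (1/8) := by
      rw [BALip.bse]
      rw [show (2:ℝ≥0∞) = ENNReal.ofReal 2 by simp]
      rw [← ENNReal.ofReal_mul (by norm_num)]
      norm_num
    have htot : ∑' n, c n ≠ ⊤ := by
      have hcn : ∀ n, c n = 2 * (2 * BALip.bse) ^ n := by
        intro n
        show 2 ^ (n + 1) * BALip.bse ^ n = _
        rw [mul_pow, pow_succ]
        ring
      rw [tsum_congr hcn, ENNReal.tsum_mul_left, ENNReal.tsum_geometric]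
      refine ENNReal.mul_ne_top (by norm_num) (ENNReal.inv_ne_top.2 ?_)
      rw [h2bse]
      intro hzero
      have hle1 := tsub_eq_zero_iff_le.1 hzero
      have hlt1 : ENNReal.ofReal (1/8) < 1 := ENNReal.ofReal_lt_one.2 (by norm_num)
      exact absurd (lt_of_le_of_lt hle1 hlt1) (lt_irrefl _)
    have hT : Filter.Tendsto (fun m => ∑' k, c (m + k)) Filter.atTop (nhds 0) := by
      have h1 := ENNReal.tendsto_sum_nat_add c htot
      have h2 : (fun m => ∑' k, c (m + k)) = fun m => ∑' k, c (k + m) := by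
        funext m
        exact tsum_congr fun k => by rw [add_comm]
      rw [h2]
      exact h1
    have hle : ∀ m, MeasureTheory.volume (⋂ m', V u m') ≤ ∑' k, c (m + k) := fun m =>
      (MeasureTheory.measure_mono (Set.iInter_subset _ m)).trans (hVle m)
    exact le_antisymm (ge_of_tendsto' hT hle) zero_le
  have hU : MeasureTheory.volume (⋃ u : List ℕ, ⋂ m, V u m) = 0 :=
    MeasureTheory.measure_iUnion_null hnullV
  exact MeasureTheory.measure_mono_null hsub hU
end

section
/- Assume B̄A_Lip(ω^ω). Then for every set A ⊆ ℕ → ℕ of cardinality at most ℵ1 there is a slalom φ : ℕ → Finset ℕ with (φ n).card ≤ n * 2^(n+1) for all n, which eventually captures every member of A: for every x ∈ A there is N such that x n ∈ φ n for all n ≥ N. -/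
open Cardinal

/-- Glue a finite head `s` with an infinite tail `z`. -/
def glueBA (s : List ℕ) (z : ℕ → ℕ) : ℕ → ℕ :=
  fun i => if h : i < s.length then s.get ⟨i, h⟩ else z (i - s.length)

lemma glueBA_injective (s : List ℕ) : Function.Injective (glueBA s) := by
  intro z z' h
  funext j
  have := congrFun h (j + s.length)
  simpa [glueBA] using this

/-- The finitary template used to build the slalom. -/
def gfunBA (L : List ℕ) (n : ℕ) (b : Fin (n + 1) → Fin 2) : ℕ → ℕ :=
  fun i => if h : i < L.length then L.get ⟨i, h⟩
    else if h2 : i < n + 1 then (b ⟨i, h2⟩ : ℕ) else 0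

lemma exists_cylBA {U : Set (ℕ → ℕ)} (hU : IsOpen U) (hne : U.Nonempty) :
    ∃ (x : ℕ → ℕ) (n : ℕ), ∀ y : ℕ → ℕ, (∀ i < n, y i = x i) → y ∈ U := by
  obtain ⟨x, hx⟩ := hne
  obtain ⟨I, u, h1, h2⟩ := isOpen_pi_iff.mp hU x hx
  refine ⟨x, I.sup id + 1, fun y hy => h2 ?_⟩
  intro i hi
  have hi' : i ∈ I := hi
  have : i < I.sup id + 1 := Nat.lt_succ_of_le (Finset.le_sup (f := id) hi')
  rw [hy i this]
  exact (h1 i hi').2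

/-- Under `B̄A_Lip(ω^ω)`, every set `A ⊆ ℕ → ℕ` of size at most `ℵ₁` is eventually captured
by a single `(n · 2^(n+1))`-slalom. -/
theorem stmt_15
    (hBA : ∀ A B : Set (ℕ → ℕ), Aleph1Dense A → Aleph1Dense B →
      ∃ f : (ℕ → ℕ) → (ℕ → ℕ), IsLip f ∧ Set.InjOn f A ∧ f '' A = B) :
    ∀ A : Set (ℕ → ℕ), Cardinal.mk ↥A ≤ Cardinal.aleph 1 →
      ∃ φ : ℕ → Finset ℕ, (∀ n : ℕ, (φ n).card ≤ n * 2 ^ (n + 1)) ∧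
        ∀ x ∈ A, ∃ N : ℕ, ∀ n ≥ N, x n ∈ φ n := by
  classical
  intro A hA
  -- a set of binary sequences of size ℵ₁
  have hbin : Cardinal.aleph 1 ≤ #({y : ℕ → ℕ | ∀ i, y i ≤ 1}) := by
    have hinj : Function.Injective
        (fun (y : ℕ → Bool) => (⟨fun i => cond (y i) 1 0, by
          intro i; rcases Bool.dichotomy (y i) with h | h <;> simp [h]⟩ :
          {y : ℕ → ℕ | ∀ i, y i ≤ 1})) := by
      intro y y' h
      funext i
      have := congrFun (congrArg Subtype.val h) i
      cases hy : y i <;> cases hy' : y' i <;> simp [hy, hy'] at this ⊢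
    have h1 : #(ℕ → Bool) = 𝔠 := by
      rw [Cardinal.mk_arrow, Cardinal.lift_id, Cardinal.lift_id, Cardinal.mk_bool,
        Cardinal.mk_nat, Cardinal.two_power_aleph0]
    calc Cardinal.aleph 1 ≤ 𝔠 := aleph_one_le_continuum
      _ = #(ℕ → Bool) := h1.symm
      _ ≤ _ := Cardinal.mk_le_of_injective hinj
  obtain ⟨T₀, hT₀⟩ := Cardinal.le_mk_iff_exists_set.mp hbin
  set T : Set (ℕ → ℕ) := Subtype.val '' T₀ with hTdef
  have hTcard : #T = Cardinal.aleph 1 := by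
    rw [hTdef, Cardinal.mk_image_eq Subtype.val_injective, hT₀]
  have hTsub : ∀ z ∈ T, ∀ i, z i ≤ 1 := by
    rintro z ⟨⟨z', hz'⟩, _, rfl⟩ i
    exact hz' i
  -- the special ℵ₁-dense set B
  set B : Set (ℕ → ℕ) := ⋃ s : List ℕ, glueBA s '' T with hBdef
  have hB_le : #B ≤ Cardinal.aleph 1 := by
    refine (Cardinal.mk_iUnion_le _).trans ?_
    have h1 : #(List ℕ) = ℵ₀ := Cardinal.mk_list_eq_aleph0 ℕ
    have h2 : ⨆ s : List ℕ, #(glueBA s '' T) ≤ Cardinal.aleph 1 :=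
      ciSup_le fun s => Cardinal.mk_image_le.trans_eq hTcard
    calc #(List ℕ) * ⨆ s : List ℕ, #(glueBA s '' T)
        ≤ ℵ₀ * Cardinal.aleph 1 := mul_le_mul' h1.le h2
      _ = Cardinal.aleph 1 := by
          rw [Cardinal.mul_eq_max le_rfl (Cardinal.aleph0_le_aleph 1)]
          exact max_eq_right (Cardinal.aleph0_le_aleph 1)
  have hB_lower : ∀ U : Set (ℕ → ℕ), IsOpen U → U.Nonempty →
      Cardinal.aleph 1 ≤ #(B ∩ U : Set (ℕ → ℕ)) := by
    intro U hU hne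
    obtain ⟨x, n, hcyl⟩ := exists_cylBA hU hne
    set s : List ℕ := List.ofFn (fun i : Fin n => x i) with hs
    have hslen : s.length = n := by simp [hs]
    have hmem : ∀ z ∈ T, glueBA s z ∈ B ∩ U := by
      intro z hz
      constructor
      · exact Set.mem_iUnion.mpr ⟨s, Set.mem_image_of_mem _ hz⟩
      · refine hcyl _ fun i hi => ?_
        have h : i < s.length := by omega
        have hget : glueBA s z i = s.get ⟨i, h⟩ := dif_pos h
        rw [hget]
        simp [hs, List.get_ofFn]
    have hinj : Function.Injective
        (fun z : T => (⟨glueBA s z.1, hmem z.1 z.2⟩ : (B ∩ U : Set (ℕ → ℕ)))) := by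
      intro z z' h
      have := glueBA_injective s (congrArg Subtype.val h)
      exact Subtype.ext this
    calc Cardinal.aleph 1 = #T := hTcard.symm
      _ ≤ _ := Cardinal.mk_le_of_injective hinj
  have hBdense : Aleph1Dense B := by
    intro U hU hne
    refine le_antisymm ?_ (hB_lower U hU hne)
    exact (Cardinal.mk_le_mk_of_subset Set.inter_subset_left).trans hB_le
  have hABdense : Aleph1Dense (A ∪ B) := by
    intro U hU hne
    refine le_antisymm ?_ ?_
    · refine (Cardinal.mk_le_mk_of_subset Set.inter_subset_left).trans ?_
      refine (Cardinal.mk_union_le A B).trans ?_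
      calc #A + #B ≤ Cardinal.aleph 1 + Cardinal.aleph 1 := add_le_add hA hB_le
        _ = Cardinal.aleph 1 := Cardinal.add_eq_self (Cardinal.aleph0_le_aleph 1)
    · refine (hB_lower U hU hne).trans ?_
      exact Cardinal.mk_le_mk_of_subset (Set.inter_subset_inter_left U Set.subset_union_right)
  obtain ⟨f, hLip, -, hIm⟩ := hBA B (A ∪ B) hBdense hABdense
  -- the slalom
  refine ⟨fun n => (Finset.univ : Finset (Fin n × (Fin (n + 1) → Fin 2))).image
    (fun p => f (gfunBA (Denumerable.ofNat (List ℕ) p.1.1) n p.2) n), ?_, ?_⟩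
  · intro n
    refine Finset.card_image_le.trans ?_
    simp [Fintype.card_fun]
  · intro x hx
    have hx' : x ∈ f '' B := by rw [hIm]; exact Or.inl hx
    obtain ⟨y, hyB, hfy⟩ := hx'
    obtain ⟨s, z, hzT, hzy⟩ : ∃ s z, z ∈ T ∧ glueBA s z = y := by
      obtain ⟨s, hys⟩ := Set.mem_iUnion.mp hyB
      obtain ⟨z, hz, hzy⟩ := hys
      exact ⟨s, z, hz, hzy⟩
    set k0 : ℕ := Encodable.encode s with hk0
    have hks : Denumerable.ofNat (List ℕ) k0 = s := Denumerable.ofNat_encode s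
    refine ⟨max (k0 + 1) s.length, fun n hn => ?_⟩
    have hk0n : k0 < n := by omega
    have hyb : ∀ i, s.length ≤ i → y i < 2 := by
      intro i hi
      have : glueBA s z i = z (i - s.length) := by
        simp [glueBA, Nat.not_lt.mpr hi]
      rw [← hzy, this]
      exact Nat.lt_succ_of_le (hTsub z hzT _)
    set b : Fin (n + 1) → Fin 2 := fun i =>
      if h : s.length ≤ i.1 then ⟨y i.1, hyb i.1 h⟩ else 0 with hb
    have hagree : ∀ i < n + 1, gfunBA s n b i = y i := by
      intro i hi
      by_cases h : i < s.length
      · rw [← hzy]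
        simp [gfunBA, glueBA, h]
      · have h' : s.length ≤ i := Nat.not_lt.mp h
        simp [gfunBA, h, hi, hb, h']
    have := hLip (gfunBA s n b) y (n + 1) hagree n (Nat.lt_succ_self n)
    refine Finset.mem_image.mpr ⟨(⟨k0, hk0n⟩, b), Finset.mem_univ _, ?_⟩
    rw [hks, this, hfy]
end

section
/- Assume B̄A_Lip(2^ω). Then for every set B ⊆ ℕ → Bool of cardinality at most ℵ1 and every corset c : ℕ → ℕ (c is positive everywhere, nondecreasing, and tends to infinity), there is a sequence of trees Sₘ ⊆ List Bool (m : ℕ), each closed under taking prefixes and of width c (for each n, the number of elements of Sₘ of length n is at most c n), such that every x ∈ B is a branch of some Sₘ: there is m with [x 0, x 1, …, x (n-1)] ∈ Sₘ for every n. (By Shelah's characterization, this says every subset of 2^ω of size ℵ1 is null additive.) -/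
/-!
Fix sparse positions `p 0 < p 1 < ⋯` with `2 ^ (k + 1) ≤ c n` as soon as `p k ≤ n`, and let
`g s y` be the list `s` followed by the bits of `y` placed at the positions `p k` (`false`
elsewhere). For a set `Y` of size `ℵ₁`, `A = ⋃ s, g s '' Y` is `ℵ₁`-dense because every cylinder
contains the range of some `g s`; hence so is `B ∪ A`, and the axiom yields Lipschitz maps `f k`
with `B ∪ A = ⋃ k, f k '' A`. The length-`n` prefix of `f k (g s y)` only depends on the bits
`y k'` with `p k' < n`, of which there are at most `log₂ (c n)`, so the prefix tree of
`range (f k ∘ g s)` has width `c`. These countably many trees cover `B`.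
-/

open Cardinal Function Set Filter

universe u

section Aleph1Dense

variable {Z : Type u} [TopologicalSpace Z]

theorem Aleph1Dense.union_of_mk_le {A B : Set Z} (hA : Aleph1Dense A) (hB : #B ≤ ℵ₁) :
    Aleph1Dense (B ∪ A) := by
  intro U hU hne
  have : Nonempty Z := ⟨hne.some⟩
  have hA₁ : #A ≤ ℵ₁ := by simpa using (hA univ isOpen_univ univ_nonempty).le
  refine le_antisymm ?_ ?_
  · calc #↥((B ∪ A) ∩ U) ≤ #↥(B ∪ A) := mk_le_mk_of_subset inter_subset_left
      _ ≤ #B + #A := mk_union_le B A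
      _ ≤ ℵ₁ + ℵ₁ := add_le_add hB hA₁
      _ = ℵ₁ := add_eq_self (aleph0_le_aleph 1)
  · rw [← hA U hU hne]
    exact mk_le_mk_of_subset (inter_subset_inter_left U subset_union_right)

theorem aleph1Dense_iUnion_image {σ α : Type u} [Countable σ] {g : σ → α → Z}
    (hg : ∀ s, Injective (g s)) (hgU : ∀ U : Set Z, IsOpen U → U.Nonempty → ∃ s, range (g s) ⊆ U)
    {Y : Set α} (hY : #Y = ℵ₁) : Aleph1Dense (⋃ s, g s '' Y) := by
  intro U hU hne
  obtain ⟨s, hs⟩ := hgU U hU hne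
  refine le_antisymm ?_ ?_
  · calc #↥((⋃ s, g s '' Y) ∩ U) ≤ #↥(⋃ s, g s '' Y) := mk_le_mk_of_subset inter_subset_left
      _ ≤ #σ * ⨆ s, #↥(g s '' Y) := mk_iUnion_le _
      _ ≤ ℵ₀ * ℵ₁ := mul_le_mul' mk_le_aleph0 (ciSup_le' fun s => mk_image_le.trans hY.le)
      _ = ℵ₁ := aleph0_mul_eq (aleph0_le_aleph 1)
  · calc ℵ₁ = #↥(g s '' Y) := by rw [mk_image_eq (hg s), hY]
      _ ≤ #↥((⋃ s, g s '' Y) ∩ U) := mk_le_mk_of_subset fun z hz =>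
        ⟨mem_iUnion.2 ⟨s, hz⟩, hs (image_subset_range _ _ hz)⟩

end Aleph1Dense

section Sequences

variable {α : Type*}

theorem exists_range_append_stream_subset [TopologicalSpace α] [DiscreteTopology α]
    {U : Set (ℕ → α)} (hU : IsOpen U) (hne : U.Nonempty) :
    ∃ s : List α, range (s ++ₛ ·) ⊆ U := by
  obtain ⟨x, hx⟩ := hne
  obtain ⟨_, ⟨y, n, rfl⟩, hxy, hsub⟩ :=
    (PiNat.isTopologicalBasis_cylinders _).exists_subset_of_mem_open hx hU
  refine ⟨List.ofFn fun i : Fin n => x i, ?_⟩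
  rintro _ ⟨u, rfl⟩
  refine hsub fun i hi => ?_
  rw [← hxy i hi]
  exact (Stream'.get_append_left i _ u (by simpa using hi)).trans (by simp)

theorem append_stream_agree (s : List α) {u v : ℕ → α} {n : ℕ} (h : ∀ i < n, u i = v i) :
    ∀ i < n, (s ++ₛ u) i = (s ++ₛ v) i := by
  intro i hi
  rcases lt_or_ge i s.length with hs | hs
  · exact (Stream'.get_append_left i s u hs).trans (Stream'.get_append_left i s v hs).symm
  · obtain ⟨j, rfl⟩ := Nat.exists_eq_add_of_le hs
    exact (Stream'.get_append_right j s u).trans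
      ((h j (by omega)).trans (Stream'.get_append_right j s v).symm)

variable [Inhabited α]

noncomputable def spread (p : ℕ → ℕ) (x : ℕ → α) : ℕ → α :=
  extend p x default

theorem spread_injective {p : ℕ → ℕ} (hp : Injective p) : Injective (spread (α := α) p) :=
  extend_injective hp _

theorem spread_agree {p : ℕ → ℕ} (hp : Injective p) {x y : ℕ → α} {n : ℕ}
    (h : ∀ k, p k < n → x k = y k) : ∀ i < n, spread p x i = spread p y i := by
  intro i hi
  by_cases hi' : ∃ k, p k = i
  · obtain ⟨k, rfl⟩ := hi'
    simp only [spread, hp.extend_apply]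
    exact h k hi
  · simp only [spread, extend_apply' _ _ _ hi']

end Sequences

section PrefixTree

variable {α : Type*}

def prefixTree (C : Set (ℕ → α)) : Set (List α) :=
  {l | ∃ x ∈ C, ∃ n, (List.ofFn fun i : Fin n => x i) = l}

theorem ofFn_mem_prefixTree {C : Set (ℕ → α)} {x : ℕ → α} (hx : x ∈ C) (n : ℕ) :
    (List.ofFn fun i : Fin n => x i) ∈ prefixTree C :=
  ⟨x, hx, n, rfl⟩

theorem mem_prefixTree_of_isPrefix {C : Set (ℕ → α)} {l l' : List α} (hl : l ∈ prefixTree C)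
    (hl' : l' <+: l) : l' ∈ prefixTree C := by
  obtain ⟨x, hx, n, rfl⟩ := hl
  refine ⟨x, hx, l'.length, List.ext_getElem (by simp) fun i _ h => ?_⟩
  simpa using (hl'.getElem h).symm

theorem setOf_mem_prefixTree_length_eq (C : Set (ℕ → α)) (n : ℕ) :
    {l ∈ prefixTree C | l.length = n} = (fun x => List.ofFn fun i : Fin n => x i) '' C := by
  ext l
  constructor
  · rintro ⟨⟨x, hx, m, rfl⟩, hm⟩
    simp only [List.length_ofFn] at hm
    exact ⟨x, hx, hm ▸ rfl⟩
  · rintro ⟨x, hx, rfl⟩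
    exact ⟨ofFn_mem_prefixTree hx n, by simp⟩

end PrefixTree

theorem mk_range_le_two_pow_card {ι γ : Type u} (f : (ι → Bool) → γ) (D : Finset ι)
    (hf : ∀ x y, (∀ k ∈ D, x k = y k) → f x = f y) : #(range f) ≤ 2 ^ D.card := by
  classical
  let G : (D → Bool) → γ := fun v => f fun k => if h : k ∈ D then v ⟨k, h⟩ else false
  have hfG : range f ⊆ range G := by
    rintro _ ⟨x, rfl⟩
    exact ⟨fun k => x k, hf _ _ fun k hk => by simp [hk]⟩
  calc #(range f) ≤ #(range G) := mk_le_mk_of_subset hfG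
    _ ≤ #(D → Bool) := mk_range_le
    _ = 2 ^ D.card := by simp

theorem two_pow_card_le {c p : ℕ → ℕ} (hc : ∀ n, 1 ≤ c n)
    (hp : ∀ k n, p k ≤ n → 2 ^ (k + 1) ≤ c n) {D : Finset ℕ} {n : ℕ} (hD : ∀ k ∈ D, p k ≤ n) :
    2 ^ D.card ≤ c n := by
  rcases D.eq_empty_or_nonempty with rfl | hne
  · simpa using hc n
  · have hcard : D.card ≤ D.max' hne + 1 := by
      simpa using Finset.card_le_card fun k hk => Finset.mem_range_succ_iff.2 (D.le_max' k hk)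
    calc 2 ^ D.card ≤ 2 ^ (D.max' hne + 1) := Nat.pow_le_pow_right two_pos hcard
      _ ≤ c n := hp _ _ (hD _ (D.max'_mem hne))

theorem exists_strictMono_two_pow_le {c : ℕ → ℕ} (hc : Tendsto c atTop atTop) :
    ∃ p : ℕ → ℕ, StrictMono p ∧ ∀ k n, p k ≤ n → 2 ^ (k + 1) ≤ c n :=
  extraction_forall_of_eventually' fun k =>
    let ⟨N, hN⟩ := eventually_atTop.1 (tendsto_atTop.1 hc (2 ^ (k + 1)))
    ⟨N, fun _ hj n hn => hN n (hj.trans hn)⟩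

theorem IsLip.mk_prefixTree_length_le {f : (ℕ → Bool) → ℕ → Bool} (hf : IsLip f) (s : List Bool)
    {p : ℕ → ℕ} (hp : StrictMono p) (n : ℕ) :
    #{l ∈ prefixTree (range (f ∘ (s ++ₛ ·) ∘ spread p)) | l.length = n} ≤
      2 ^ ((Finset.range n).filter (p · < n)).card := by
  rw [setOf_mem_prefixTree_length_eq, ← range_comp]
  refine mk_range_le_two_pow_card _ _ fun x y hxy => List.ofFn_inj.2 <| funext fun i =>
    hf _ _ n (append_stream_agree s (spread_agree hp.injective fun k hk => hxy k ?_)) i i.2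
  exact Finset.mem_filter.2 ⟨Finset.mem_range.2 ((hp.id_le k).trans_lt hk), hk⟩

/-- Under `B̄A_Lip(2^ω)`, every set `B ⊆ ℕ → Bool` of size at most `ℵ₁` can, for every
corset `c`, be covered by the branches of countably many prefix-closed trees of width `c`.
(By Shelah's characterization this says every such set is null additive.) -/
theorem stmt_16
    (hBA : ∀ A B : Set (ℕ → Bool), Aleph1Dense A → Aleph1Dense B →
      ∃ f : ℕ → (ℕ → Bool) → (ℕ → Bool), (∀ n, IsLip (f n)) ∧ B = ⋃ n, f n '' A) :
    ∀ B : Set (ℕ → Bool), Cardinal.mk ↥B ≤ Cardinal.aleph 1 →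
      ∀ c : ℕ → ℕ, (∀ n, 1 ≤ c n) → Monotone c →
        Filter.Tendsto c Filter.atTop Filter.atTop →
        ∃ S : ℕ → Set (List Bool),
          (∀ m : ℕ, ∀ l ∈ S m, ∀ l' : List Bool, l' <+: l → l' ∈ S m) ∧
          (∀ m n : ℕ, Cardinal.mk ↥{l ∈ S m | l.length = n} ≤ (c n : Cardinal)) ∧
          (∀ x ∈ B, ∃ m : ℕ, ∀ n : ℕ, (List.ofFn fun i : Fin n => x i) ∈ S m) := by
  intro B hB c hc _ hc_tendsto
  obtain ⟨p, hp, hpc⟩ := exists_strictMono_two_pow_le hc_tendsto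
  obtain ⟨Y, hY⟩ : ∃ Y : Set (ℕ → Bool), #Y = ℵ₁ :=
    le_mk_iff_exists_set.1 (aleph_one_le_continuum.trans_eq (by simp))
  let g : List Bool → (ℕ → Bool) → ℕ → Bool := fun s => (s ++ₛ ·) ∘ spread p
  have hA : Aleph1Dense (⋃ s, g s '' Y) :=
    aleph1Dense_iUnion_image (g := g)
      (fun s => Injective.comp (fun a b => Stream'.append_right_injective s a b)
        (spread_injective hp.injective))
      (fun U hU hne => (exists_range_append_stream_subset hU hne).imp fun s hs =>
        (range_comp_subset_range _ _).trans hs) hY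
  obtain ⟨f, hf, hcover⟩ := hBA _ _ hA (hA.union_of_mk_le hB)
  obtain ⟨e, he⟩ := exists_surjective_nat (ℕ × List Bool)
  refine ⟨fun m => prefixTree (range (f (e m).1 ∘ g (e m).2)),
    fun m _ hl _ hl' => mem_prefixTree_of_isPrefix hl hl', fun m n => ?_, fun x hx => ?_⟩
  · refine ((hf _).mk_prefixTree_length_le _ hp n).trans ?_
    have hD : ∀ k ∈ (Finset.range n).filter (p · < n), p k ≤ n :=
      fun k hk => (Finset.mem_filter.1 hk).2.le
    exact_mod_cast two_pow_card_le hc hpc hD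
  · have hx' : x ∈ ⋃ k, f k '' ⋃ s, g s '' Y := hcover ▸ mem_union_left _ hx
    simp only [mem_iUnion, mem_image] at hx'
    obtain ⟨k, _, ⟨s, y, _, rfl⟩, rfl⟩ := hx'
    obtain ⟨m, hm⟩ := he (k, s)
    refine ⟨m, fun n => ?_⟩
    simp only [hm]
    exact ofFn_mem_prefixTree (mem_range_self y) n
end
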